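/- arXiv:1706.02887 — 10 statements merged into one kernel-verified Lean document; each statement's English description precedes it below -/
import Mathlib

section
/- Assume f̂^≤(x) < ∞ for all x ∈ X. Let s : [0,1] → ℝ be any function satisfying r^<(s(q)) ≤ q ≤ r^≤(s(q)) for all q ∈ [0,1]. Fix m ∈ X and set p = r^<(f(m)), the probability that a sample x ~ P strictly improves on m. Then for every q ∈ [0,p]: (i) P({x ∈ X | f̂^<(x) + (p − r^<(s(q)))/u ≤ f̂^<(m)}) ≥ q, and (ii) P({x ∈ X | f̂^≤(x) + (p − r^≤(s(q)))/u + Λ(L_f(m)) ≤ f̂^≤(m)}) ≥ q. -/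
open MeasureTheory Set

/-- Probability of strict improvement below level `z`: `r^<(z) = P {x | f x < z}` (as a real). -/
noncomputable def rLT {X : Type*} [MeasurableSpace X] (P : Measure X) (f : X → ℝ) (z : ℝ) : ℝ :=
  (P {x | f x < z}).toReal

/-- Probability of weak improvement below level `z`: `r^≤(z) = P {x | f x ≤ z}` (as a real). -/
noncomputable def rLE {X : Type*} [MeasurableSpace X] (P : Measure X) (f : X → ℝ) (z : ℝ) : ℝ :=
  (P {x | f x ≤ z}).toReal

/-! A sample `x` with `f x ≤ s q` and `f x < f m` has its sublevel set inside both the sublevel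
set `B` of `f` at `s q` and `C = {f < f m}`. The density bound `P ≤ u Λ` forces `C \ B`, of
`P`-mass at least `p − r(s q)`, to have `Λ`-volume at least `(p − r(s q)) / u`, and the sublevel
set of `x` misses `C \ B`. Since sublevel sets are nested, such samples have probability at least
`min (r^≤(s q)) p ≥ q`. -/

theorem ENNReal.ofReal_toReal_sub_toReal_le {a b : ENNReal} (hb : b ≠ ⊤) :
    ENNReal.ofReal (a.toReal - b.toReal) ≤ a - b :=
  (ENNReal.ofReal_le_ofReal (ENNReal.le_toReal_sub hb)).trans ENNReal.ofReal_toReal_le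

section

variable {X : Type*} [MeasurableSpace X]

theorem measure_add_sub_div_le_of_le_mul {Λ P : Measure X} {c : ENNReal}
    (hPΛ : ∀ A : Set X, MeasurableSet A → P A ≤ c * Λ A) {A B C : Set X}
    (hAB : A ⊆ B) (hAC : A ⊆ C) (hB : MeasurableSet B) (hC : MeasurableSet C) :
    Λ A + (P C - P B) / c ≤ Λ C := by
  have hCB : MeasurableSet (C \ B) := hC.diff hB
  calc Λ A + (P C - P B) / c
      ≤ Λ A + P (C \ B) / c := by gcongr; exact le_measure_sdiff
    _ ≤ Λ A + Λ (C \ B) := by gcongr; exact ENNReal.div_le_of_le_mul' (hPΛ _ hCB)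
    _ = Λ (A ∪ C \ B) :=
        (measure_union (disjoint_sdiff_right.mono_left hAB) hCB).symm
    _ ≤ Λ C := measure_mono (union_subset hAC sdiff_subset)

theorem measure_setOf_lt_add_measure_setOf_eq {μ : Measure X} {f : X → ℝ} (hf : Measurable f)
    (a : ℝ) : μ {x | f x < a} + μ {x | f x = a} = μ {x | f x ≤ a} := by
  have hsplit : {x | f x ≤ a} = {x | f x < a} ∪ {x | f x = a} := by
    ext x
    simp [le_iff_lt_or_eq]
  have hdisj : Disjoint {x | f x < a} {x | f x = a} :=
    disjoint_left.2 fun _ h₁ h₂ => ne_of_lt h₁ h₂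
  rw [hsplit, measure_union hdisj (hf (measurableSet_singleton a))]

theorem min_measure_le_measure_setOf_le_and_lt (μ : Measure X) (f : X → ℝ) (a b : ℝ) :
    min (μ {x | f x ≤ a}) (μ {x | f x < b}) ≤ μ {x | f x ≤ a ∧ f x < b} := by
  rcases lt_or_ge a b with hab | hba
  · exact (min_le_left _ _).trans (measure_mono fun x hx => ⟨hx, lt_of_le_of_lt hx hab⟩)
  · exact (min_le_right _ _).trans (measure_mono fun x hx => ⟨hx.le.trans hba, hx⟩)

end

theorem quantile_decrease_general
    {X : Type*} [MeasurableSpace X] (Λ : Measure X)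
    (P : Measure X) [IsProbabilityMeasure P]
    (f : X → ℝ) (hf : Measurable f)
    (u : ℝ) (hu : 0 < u)
    (hPu : ∀ A : Set X, MeasurableSet A → P A ≤ ENNReal.ofReal u * Λ A)
    (s : ℝ → ℝ) (hs : ∀ q ∈ Icc (0 : ℝ) 1, rLT P f (s q) ≤ q ∧ q ≤ rLE P f (s q))
    (m : X) :
    ∀ q ∈ Icc (0 : ℝ) (rLT P f (f m)),
      ENNReal.ofReal q ≤
        P {x | Λ {x' | f x' < f x} + ENNReal.ofReal ((rLT P f (f m) - rLT P f (s q)) / u)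
            ≤ Λ {x' | f x' < f m}} ∧
      ENNReal.ofReal q ≤
        P {x | Λ {x' | f x' ≤ f x} + ENNReal.ofReal ((rLT P f (f m) - rLE P f (s q)) / u)
            + Λ {x' | f x' = f m} ≤ Λ {x' | f x' ≤ f m}} := by
  rintro q ⟨hq0, hqp⟩
  have hq_le_rLE : q ≤ rLE P f (s q) := (hs q ⟨hq0, hqp.trans measureReal_le_one⟩).2
  have hq_le_S : ENNReal.ofReal q ≤ P {x | f x ≤ s q ∧ f x < f m} :=
    (le_min (ENNReal.ofReal_le_of_le_toReal hq_le_rLE) (ENNReal.ofReal_le_of_le_toReal hqp)).trans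
      (min_measure_le_measure_setOf_le_and_lt P f _ _)
  have decrease_le {B A : Set X} (hB : MeasurableSet B) (hAB : A ⊆ B) (hA : A ⊆ {x | f x < f m}) :
      Λ A + ENNReal.ofReal (((P {x | f x < f m}).toReal - (P B).toReal) / u)
        ≤ Λ {x | f x < f m} := by
    rw [ENNReal.ofReal_div_of_pos hu]
    grw [ENNReal.ofReal_toReal_sub_toReal_le (measure_ne_top P B)]
    exact measure_add_sub_div_le_of_le_mul hPu hAB hA hB (hf measurableSet_Iio)
  refine ⟨hq_le_S.trans (measure_mono fun x ⟨hxs, hxm⟩ => ?_),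
    hq_le_S.trans (measure_mono fun x ⟨hxs, hxm⟩ => ?_)⟩
  · exact decrease_le (hf measurableSet_Iio) (fun y hy => lt_of_lt_of_le hy hxs)
      (fun y hy => hy.trans hxm)
  · rw [mem_ofPred_eq, ← measure_setOf_lt_add_measure_setOf_eq hf (f m)]
    gcongr
    exact decrease_le (hf measurableSet_Iic) (fun y hy => hy.trans hxs)
      (fun y hy => lt_of_le_of_lt hy hxm)

/-- Quantile bounds for the decrease of the spatial suboptimality
functions `f̂^<(x) = Λ {x' | f x' < f x}` and `f̂^≤(x) = Λ {x' | f x' ≤ f x}` under a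
sample `x ∼ P`, where `P` has density bounded by `u` w.r.t. `Λ`, and `s` is a measurable
inverse of the improvement-probability functions: for every `q ∈ [0, p]`, with
`p = r^<(f m)`, the `q`-quantile of the `f̂^<`-decrease is at least `(p − r^<(s q))/u`,
and the `q`-quantile of the `f̂^≤`-decrease is at least `(p − r^≤(s q))/u + Λ(L_f(m))`. -/
theorem quantile_decrease
    {X : Type*} [MeasurableSpace X] (Λ : Measure X) [SigmaFinite Λ]
    (P : Measure X) [IsProbabilityMeasure P]
    (f : X → ℝ) (hf : Measurable f)
    (hfin : ∀ x : X, Λ {x' | f x' ≤ f x} < ⊤)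
    (u : ℝ) (hu : 0 < u)
    (hPu : ∀ A : Set X, MeasurableSet A → P A ≤ ENNReal.ofReal u * Λ A)
    (s : ℝ → ℝ) (hs : ∀ q ∈ Icc (0 : ℝ) 1, rLT P f (s q) ≤ q ∧ q ≤ rLE P f (s q))
    (m : X) :
    ∀ q ∈ Icc (0 : ℝ) (rLT P f (f m)),
      ENNReal.ofReal q ≤
        P {x | Λ {x' | f x' < f x} + ENNReal.ofReal ((rLT P f (f m) - rLT P f (s q)) / u)
            ≤ Λ {x' | f x' < f m}} ∧
      ENNReal.ofReal q ≤
        P {x | Λ {x' | f x' ≤ f x} + ENNReal.ofReal ((rLT P f (f m) - rLE P f (s q)) / u)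
            + Λ {x' | f x' = f m} ≤ Λ {x' | f x' ≤ f m}} :=
  quantile_decrease_general Λ P f hf u hu hPu s hs m
end

section
/- Assume f̂^≤(x) < ∞ for all x ∈ X. Fix m ∈ X and set p = r^<(f(m)). Let Z = {z ∈ ℝ | r^<(z) < r^≤(z)} (this set is countable since r^≤ is monotone) and let ζ_p = ∑_{z ∈ Z, r^≤(z) ≤ p} (r^≤(z) − r^<(z))² be the sum of squared improvement jumps within the success range. Then the expected decrease of spatial suboptimality of a sample x ~ P satisfies ∫ max{0, f̂^<(m) − f̂^<(x)} dP(x) ≥ (p² + ζ_p)/(2u), where the integrand is read as 0 whenever f̂^<(x) ≥ f̂^<(m). -/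
/-!
Push everything forward to `ℝ` along `f`: `ν = f_* P`, `μ = f_* Λ`, and let `c = f m`. For the
restriction `ν'` of `ν` to `(-∞, c)`, invariance of `ν' ⊗ ν'` under the swap gives
`2 (ν' ⊗ ν') {s ≤ t} = ν'(ℝ)² + (ν' ⊗ ν')(diagonal)`, i.e. `p² + ζ_p` since the diagonal carries
exactly the squared atoms. Slicing, `(ν' ⊗ ν') {s ≤ t} ≤ ∫ ν [s, c) dν(s) ≤ u ∫ μ [s, c) dν(s)`, and
`μ [f x, c) = f̂^<(m) - f̂^<(x)` whenever `f x < c`.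
-/

open MeasureTheory Set

/-- Sum of squared improvement jumps within the success range:
`ζ_p = ∑_{z : r^<(z) < r^≤(z), r^≤(z) ≤ p} (r^≤(z) − r^<(z))²`. -/
noncomputable def zetaJump {X : Type*} [MeasurableSpace X] (P : Measure X) (f : X → ℝ)
    (p : ℝ) : ℝ :=
  ∑' z : {z : ℝ // rLT P f z < rLE P f z ∧ rLE P f z ≤ p},
    (rLE P f (z : ℝ) - rLT P f (z : ℝ)) ^ 2

open scoped ENNReal

section Atoms

variable {α : Type*} [MeasurableSpace α] (μ : Measure α) [SFinite μ]

lemma lintegral_measure_singleton [MeasurableSingletonClass α] :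
    ∫⁻ a, μ {a} ∂μ = ∑' a, μ {a} ^ 2 := by
  set E := {a | 0 < μ {a}}
  have hE : E.Countable := by
    convert Measure.countable_meas_level_set_pos (μ := μ) measurable_id using 4
    simp
  have hsupp : (fun a => μ {a}).support ⊆ E := fun a ha => pos_iff_ne_zero.2 ha
  have hsupp_sq : (fun a => μ {a} ^ 2).support ⊆ E := fun a ha =>
    pos_iff_ne_zero.2 (pow_ne_zero_iff two_ne_zero |>.1 ha)
  rw [← setLIntegral_eq_of_support_subset hsupp, lintegral_countable _ hE,
    ← tsum_subtype_eq_of_support_subset hsupp_sq]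
  simp only [sq]

lemma prod_self_diagonal [MeasurableEq α] : (μ.prod μ) (diagonal α) = ∑' a, μ {a} ^ 2 := by
  have hslice : ∀ a, Prod.mk a ⁻¹' diagonal α = {a} := fun a => by ext; simp [eq_comm]
  simp only [Measure.prod_apply measurableSet_diagonal, hslice, lintegral_measure_singleton]

end Atoms

section LinearOrder

variable {α : Type*} [MeasurableSpace α] [LinearOrder α] [TopologicalSpace α]
  [OrderClosedTopology α] [BorelSpace α]

lemma two_mul_prod_self_setOf_le [SecondCountableTopology α] (μ : Measure α) [SFinite μ] :
    2 * (μ.prod μ) {q | q.1 ≤ q.2} = μ univ ^ 2 + (μ.prod μ) (diagonal α) := by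
  set L : Set (α × α) := {q | q.1 ≤ q.2}
  have hunion : L ∪ Prod.swap ⁻¹' L = univ := by
    ext q
    simpa [L] using le_total q.1 q.2
  have hinter : L ∩ Prod.swap ⁻¹' L = diagonal α := by
    ext q
    simp [L, le_antisymm_iff]
  have hswap : (μ.prod μ) (Prod.swap ⁻¹' L) = (μ.prod μ) L :=
    Measure.measurePreserving_swap.measure_preimage measurableSet_le'.nullMeasurableSet
  have := measure_union_add_inter L (measurableSet_le'.preimage measurable_swap) (μ := μ.prod μ)
  rw [hunion, hinter, hswap, ← univ_prod_univ, Measure.prod_prod] at this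
  rw [two_mul, ← this, sq]

lemma measurable_measure_Iio (μ : Measure α) : Measurable fun a => μ (Iio a) :=
  Monotone.measurable fun _ _ h => measure_mono (Iio_subset_Iio h)

lemma measurable_ofReal_sub_measure_Iio (μ : Measure α) (C : ℝ) :
    Measurable fun a => ENNReal.ofReal (C - (μ (Iio a)).toReal) :=
  ENNReal.measurable_ofReal.comp (measurable_const.sub (measurable_measure_Iio μ).ennreal_toReal)

lemma measure_Ico_le_ofReal_sub (μ : Measure α) {c : α} (hc : μ (Iio c) ≠ ∞) (a : α) :
    μ (Ico a c) ≤ ENNReal.ofReal ((μ (Iio c)).toReal - (μ (Iio a)).toReal) := by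
  rcases lt_or_ge a c with hac | hca
  · have hsplit : μ (Iio a) + μ (Ico a c) = μ (Iio c) := by
      rw [← measure_union (Iio_disjoint_Ici le_rfl |>.mono_right Ico_subset_Ici_self)
        measurableSet_Ico, Iio_union_Ico_eq_Iio hac.le]
    have hfin : μ (Ico a c) ≠ ∞ := ne_top_of_le_ne_top hc (measure_mono Ico_subset_Iio_self)
    have hfin' : μ (Iio a) ≠ ∞ := ne_top_of_le_ne_top hc (measure_mono (Iio_subset_Iio hac.le))
    rw [← hsplit, ENNReal.toReal_add hfin' hfin, add_sub_cancel_left, ENNReal.ofReal_toReal hfin]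
  · simp [Ico_eq_empty hca.not_gt]

lemma measure_Iic_eq_measure_Iio_add (μ : Measure α) (z : α) : μ (Iic z) = μ (Iio z) + μ {z} := by
  rw [← Iio_union_right, measure_union (by simp) (measurableSet_singleton z)]

lemma measure_Iic_le_measure_Iio_iff (μ : Measure α) [IsFiniteMeasure μ] {z : α} (c : α)
    (hz : μ {z} ≠ 0) : μ (Iic z) ≤ μ (Iio c) ↔ z < c := by
  refine ⟨fun h => ?_, fun h => measure_mono (Iic_subset_Iio.2 h)⟩
  by_contra! hcz
  have : μ (Iio z) < μ (Iic z) := by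
    rw [measure_Iic_eq_measure_Iio_add]
    exact ENNReal.lt_add_right (measure_ne_top _ _) hz
  exact (h.trans (measure_mono (Iio_subset_Iio hcz))).not_gt this

lemma measure_Iio_sq_add_tsum_le [SecondCountableTopology α] (ν μ : Measure α) [SFinite ν]
    {K : ℝ≥0∞} (hνμ : ∀ s, MeasurableSet s → ν s ≤ K * μ s) {c : α} (hc : μ (Iio c) ≠ ∞) :
    ν (Iio c) ^ 2 + ∑' t : Iio c, ν {(t : α)} ^ 2 ≤
      2 * K * ∫⁻ a, ENNReal.ofReal ((μ (Iio c)).toReal - (μ (Iio a)).toReal) ∂ν := by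
  set ν' := ν.restrict (Iio c)
  have hatoms : ∑' t : Iio c, ν {(t : α)} ^ 2 = ∑' t, ν' {t} ^ 2 := by
    rw [tsum_subtype (Iio c) fun t => ν {t} ^ 2]
    congr 1 with t
    by_cases ht : t ∈ Iio c <;> simp [ν', Measure.restrict_apply (measurableSet_singleton t), ht]
  have hslice : ∀ a, ν' (Prod.mk a ⁻¹' {q : α × α | q.1 ≤ q.2}) = ν (Ico a c) := fun a => by
    change ν' (Ici a) = _
    rw [Measure.restrict_apply measurableSet_Ici, Ici_inter_Iio]
  calc ν (Iio c) ^ 2 + ∑' t : Iio c, ν {(t : α)} ^ 2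
        = ν' univ ^ 2 + (ν'.prod ν') (diagonal α) := by
        rw [Measure.restrict_apply_univ, hatoms, prod_self_diagonal]
    _ = 2 * (ν'.prod ν') {q | q.1 ≤ q.2} := (two_mul_prod_self_setOf_le ν').symm
    _ = 2 * ∫⁻ a, ν (Ico a c) ∂ν' := by
        rw [Measure.prod_apply measurableSet_le']
        simp only [hslice]
    _ ≤ 2 * ∫⁻ a, ν (Ico a c) ∂ν := by
        gcongr
        exact Measure.restrict_le_self
    _ ≤ 2 * ∫⁻ a, K * ENNReal.ofReal ((μ (Iio c)).toReal - (μ (Iio a)).toReal) ∂ν := by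
        gcongr with a
        exact (hνμ _ measurableSet_Ico).trans (by gcongr; exact measure_Ico_le_ofReal_sub μ hc a)
    _ = 2 * K * ∫⁻ a, ENNReal.ofReal ((μ (Iio c)).toReal - (μ (Iio a)).toReal) ∂ν := by
        rw [lintegral_const_mul K (measurable_ofReal_sub_measure_Iio μ _), mul_assoc]

end LinearOrder

section Sample

variable {X : Type*} [MeasurableSpace X] (P : Measure X) {f : X → ℝ}

lemma rLT_eq_toReal_map (hf : Measurable f) (z : ℝ) : rLT P f z = (P.map f (Iio z)).toReal := by
  rw [rLT, Measure.map_apply hf measurableSet_Iio]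
  rfl

lemma rLE_eq_toReal_map (hf : Measurable f) (z : ℝ) : rLE P f z = (P.map f (Iic z)).toReal := by
  rw [rLE, Measure.map_apply hf measurableSet_Iic]
  rfl

lemma zetaJump_rLT_eq [IsFiniteMeasure P] (hf : Measurable f) (c : ℝ) :
    zetaJump P f (rLT P f c) = (∑' t : Iio c, P.map f {(t : ℝ)} ^ 2).toReal := by
  set ν := P.map f
  have hjump : ∀ z, rLE P f z - rLT P f z = (ν {z}).toReal := fun z => by
    rw [rLE_eq_toReal_map P hf, rLT_eq_toReal_map P hf, measure_Iic_eq_measure_Iio_add,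
      ENNReal.toReal_add (measure_ne_top _ _) (measure_ne_top _ _), add_sub_cancel_left]
  have hmem : ∀ z, (rLT P f z < rLE P f z ∧ rLE P f z ≤ rLT P f c) ↔ z < c ∧ ν {z} ≠ 0 := by
    intro z
    have hpos : rLT P f z < rLE P f z ↔ ν {z} ≠ 0 := by
      rw [← sub_pos, hjump, ENNReal.toReal_pos_iff, pos_iff_ne_zero]
      simp
    rw [hpos, rLE_eq_toReal_map P hf, rLT_eq_toReal_map P hf,
      ENNReal.toReal_le_toReal (measure_ne_top _ _) (measure_ne_top _ _)]
    constructor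
    · rintro ⟨hz, hle⟩
      exact ⟨(measure_Iic_le_measure_Iio_iff ν c hz).1 hle, hz⟩
    · rintro ⟨hzc, hz⟩
      exact ⟨hz, (measure_Iic_le_measure_Iio_iff ν c hz).2 hzc⟩
  have hsupp : ((Iio c).indicator fun t => (ν {t} ^ 2).toReal).support ⊆
      {z | rLT P f z < rLE P f z ∧ rLE P f z ≤ rLT P f c} := by
    intro z hz
    rw [Function.mem_support, indicator_apply_ne_zero] at hz
    exact (hmem z).2 ⟨hz.1, fun h0 => hz.2 (by simp [h0])⟩
  rw [ENNReal.tsum_toReal_eq fun _ => ENNReal.pow_ne_top (measure_ne_top _ _),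
    tsum_subtype (Iio c) fun t => (ν {t} ^ 2).toReal,
    ← tsum_subtype_eq_of_support_subset hsupp, zetaJump]
  refine tsum_congr fun z => ?_
  rw [hjump, indicator_of_mem (show (z : ℝ) ∈ Iio c from ((hmem z).1 z.2).1), ENNReal.toReal_pow]

lemma lintegral_ofReal_sub_eq_ofReal_integral [IsFiniteMeasure P] {g : X → ℝ} (hg : Measurable g)
    (hg0 : ∀ x, 0 ≤ g x) (C : ℝ) :
    ∫⁻ x, ENNReal.ofReal (C - g x) ∂P = ENNReal.ofReal (∫ x, max 0 (C - g x) ∂P) := by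
  have hint : Integrable (fun x => max 0 (C - g x)) P := by
    refine .of_bound (by fun_prop) |C| (ae_of_all _ fun x => ?_)
    rw [Real.norm_eq_abs, abs_of_nonneg (le_max_left _ _)]
    exact max_le (abs_nonneg C) (by linarith [hg0 x, le_abs_self C])
  rw [ofReal_integral_eq_lintegral_ofReal hint (ae_of_all _ fun _ => le_max_left _ _)]
  simp

end Sample

theorem expected_decrease_general
    {X : Type*} [MeasurableSpace X] (Λ : Measure X)
    (P : Measure X) [IsProbabilityMeasure P]
    (f : X → ℝ) (hf : Measurable f)
    (hfin : ∀ x : X, Λ {x' | f x' ≤ f x} < ⊤)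
    (u : ℝ) (hu : 0 < u)
    (hPu : ∀ A : Set X, MeasurableSet A → P A ≤ ENNReal.ofReal u * Λ A)
    (m : X) :
    ((rLT P f (f m)) ^ 2 + zetaJump P f (rLT P f (f m))) / (2 * u) ≤
      ∫ x, max 0 ((Λ {x' | f x' < f m}).toReal - (Λ {x' | f x' < f x}).toReal) ∂P := by
  set ν := P.map f
  set μ := Λ.map f
  have hμ : ∀ a, μ (Iio a) = Λ {x | f x < a} := fun a => Measure.map_apply hf measurableSet_Iio
  have hνμ : ∀ s, MeasurableSet s → ν s ≤ ENNReal.ofReal u * μ s := fun s hs => by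
    simpa only [ν, μ, Measure.map_apply hf hs] using hPu _ (hf hs)
  have hc : μ (Iio (f m)) ≠ ∞ := by
    rw [hμ]
    exact ((measure_mono fun x (hx : f x < f m) => hx.le).trans_lt (hfin m)).ne
  have key := measure_Iio_sq_add_tsum_le ν μ hνμ hc
  rw [lintegral_map (measurable_ofReal_sub_measure_Iio μ _) hf,
    lintegral_ofReal_sub_eq_ofReal_integral P (g := fun x => (μ (Iio (f x))).toReal)
      ((measurable_measure_Iio μ).comp hf).ennreal_toReal fun _ => ENNReal.toReal_nonneg] at key
  simp only [hμ] at key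
  set I := ∫ x, max 0 ((Λ {x' | f x' < f m}).toReal - (Λ {x' | f x' < f x}).toReal) ∂P
  have hI : 0 ≤ I := integral_nonneg fun _ => le_max_left _ _
  rw [← ENNReal.ofReal_ofNat 2, ← ENNReal.ofReal_mul zero_le_two,
    ← ENNReal.ofReal_mul (by positivity)] at key
  obtain ⟨hp_fin, hζ_fin⟩ := ENNReal.add_ne_top.1 (key.trans_lt ENNReal.ofReal_lt_top).ne
  have hreal := ENNReal.toReal_le_of_le_ofReal (by positivity) key
  rw [ENNReal.toReal_add hp_fin hζ_fin, ENNReal.toReal_pow, ← rLT_eq_toReal_map P hf,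
    ← zetaJump_rLT_eq P hf] at hreal
  rw [div_le_iff₀ (by positivity)]
  linarith

/-- Expected decrease of the spatial suboptimality
`f̂^<(x) = Λ {x' | f x' < f x}` under a sample `x ∼ P` with density bounded by `u`:
`∫ max{0, f̂^<(m) − f̂^<(x)} dP(x) ≥ (p² + ζ_p)/(2u)` where `p = r^<(f m)`. -/
theorem expected_decrease
    {X : Type*} [MeasurableSpace X] (Λ : Measure X) [SigmaFinite Λ]
    (P : Measure X) [IsProbabilityMeasure P]
    (f : X → ℝ) (hf : Measurable f)
    (hfin : ∀ x : X, Λ {x' | f x' ≤ f x} < ⊤)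
    (u : ℝ) (hu : 0 < u)
    (hPu : ∀ A : Set X, MeasurableSet A → P A ≤ ENNReal.ofReal u * Λ A)
    (m : X) :
    ((rLT P f (f m)) ^ 2 + zetaJump P f (rLT P f (f m))) / (2 * u) ≤
      ∫ x, max 0 ((Λ {x' | f x' < f m}).toReal - (Λ {x' | f x' < f x}).toReal) ∂P :=
  expected_decrease_general Λ P f hf hfin u hu hPu m
end

section
/- Assume every level set of f is Λ-null (so f̂^<(x) = f̂^≤(x) =: f̂(x) for all x) and f̂(x) < ∞ for all x ∈ X. Fix m ∈ X and set p = P(S_f^<(m)). Then for every q ∈ [0,p]: P({x ∈ X | f̂(x) + (p − q)/u ≤ f̂(m)}) ≥ q, and the expected decrease satisfies ∫ max{0, f̂(m) − f̂(x)} dP(x) ≥ p²/(2u). -/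
/-!
Write `g y = Λ {f < y}`. Since the level sets of `f` are `Λ`-null, `g` is continuous wherever it
is finite, so the points of `{f < f m}` at which `g ∘ f` is still at least `g (f m) - c` have
`Λ`-measure at most `c`. As `P ≤ u Λ`, all but `u c` of the `P`-mass `p` of `{f < f m}` lies
where `g ∘ f` has dropped by more than `c`. Taking `c = (p - q) / u` gives the quantile bound,
and integrating the tail bound `P (decrease > t) ≥ p - u t` over `t ∈ (0, p / u)` (layer cake)
gives `p² / (2u)`.
-/

open MeasureTheory Set Filter Topology
open scoped ENNReal

section SublevelSets

variable {X : Type*} [MeasurableSpace X] {Λ : Measure X} {f : X → ℝ}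

theorem monotone_measure_setOf_lt : Monotone fun y => Λ {x | f x < y} :=
  fun _ _ hyz => measure_mono fun _ hx => lt_of_lt_of_le hx hyz

theorem measurable_measure_setOf_lt : Measurable fun y => Λ {x | f x < y} :=
  monotone_measure_setOf_lt.measurable

theorem measure_setOf_le_eq_measure_setOf_lt {y : ℝ} (hy : Λ {x | f x = y} = 0) :
    Λ {x | f x ≤ y} = Λ {x | f x < y} := by
  rw [← measure_sdiff_null hy]
  congr 1
  ext x
  simp [lt_iff_le_and_ne]

theorem tendsto_measure_setOf_lt_nhdsGT (hf : Measurable f) {y z : ℝ} (hyz : y < z)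
    (hz : Λ {x | f x < z} ≠ ∞) :
    Tendsto (fun w => Λ {x | f x < w}) (𝓝[>] y) (𝓝 (Λ {x | f x ≤ y})) := by
  have hinter : ⋂ w > y, {x | f x < w} = {x | f x ≤ y} := by
    ext x
    simpa using forall_gt_iff_le
  rw [← hinter]
  exact tendsto_measure_biInter_gt (fun _ _ => (hf measurableSet_Iio).nullMeasurableSet)
    (fun _ _ _ hij _ hx => lt_of_lt_of_le hx hij) ⟨z, hyz, hz⟩

theorem tendsto_measure_setOf_lt_atBot (hf : Measurable f) {z : ℝ}
    (hz : Λ {x | f x < z} ≠ ∞) :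
    Tendsto (fun w => Λ {x | f x < w}) atBot (𝓝 0) := by
  have hinter : ⋂ w : ℝ, {x | f x < w} = ∅ :=
    eq_empty_of_forall_notMem fun x hx => lt_irrefl (f x) (mem_iInter.1 hx (f x))
  rw [← measure_empty (μ := Λ), ← hinter]
  exact tendsto_measure_iInter_atBot (fun _ => (hf measurableSet_Iio).nullMeasurableSet)
    (fun _ _ hvw _ hx => lt_of_lt_of_le hx hvw) ⟨z, hz⟩

theorem le_measure_setOf_lt_of_forall_Ioo (hf : Measurable f) {y z : ℝ}
    (hy : Λ {x | f x = y} = 0) (hyz : y < z) (hz : Λ {x | f x < z} ≠ ∞) {a : ℝ≥0∞}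
    (ha : ∀ w ∈ Ioo y z, a ≤ Λ {x | f x < w}) :
    a ≤ Λ {x | f x < y} := by
  rw [← measure_setOf_le_eq_measure_setOf_lt hy]
  exact ge_of_tendsto (tendsto_measure_setOf_lt_nhdsGT hf hyz hz)
    (eventually_of_mem (Ioo_mem_nhdsGT hyz) ha)

theorem measure_setOf_lt_and_le_le_sub (hf : Measurable f)
    (hlevel : ∀ y : ℝ, Λ {x | f x = y} = 0) {y : ℝ} (hy : Λ {x | f x < y} ≠ ∞)
    (a : ℝ≥0∞) :
    Λ {x | f x < y ∧ a ≤ Λ {x' | f x' < f x}} ≤ Λ {x | f x < y} - a := by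
  set T : Set ℝ := {t | t < y ∧ a ≤ Λ {x | f x < t}}
  change Λ (f ⁻¹' T) ≤ _
  rcases T.eq_empty_or_nonempty with hT | ⟨t₀, ht₀⟩
  · simp [hT]
  by_cases hbdd : BddBelow T
  · have hs : sInf T < y := (csInf_le hbdd ht₀).trans_lt ht₀.1
    have ha : a ≤ Λ {x | f x < sInf T} := by
      refine le_measure_setOf_lt_of_forall_Ioo hf (hlevel _) hs hy fun w hw => ?_
      obtain ⟨t, ht, htw⟩ := exists_lt_of_csInf_lt ⟨t₀, ht₀⟩ hw.1
      exact ht.2.trans (monotone_measure_setOf_lt htw.le)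
    calc Λ (f ⁻¹' T) ≤ Λ ({x | f x < y} \ {x | f x < sInf T}) :=
          measure_mono fun x hx => ⟨hx.1, (csInf_le hbdd hx).not_gt⟩
      _ = Λ {x | f x < y} - Λ {x | f x < sInf T} :=
          measure_sdiff (fun x hx => hx.trans hs) (hf measurableSet_Iio).nullMeasurableSet
            (ne_top_of_le_ne_top hy (monotone_measure_setOf_lt hs.le))
      _ ≤ Λ {x | f x < y} - a := tsub_le_tsub_left ha _
  · have ha : a ≤ 0 := ge_of_tendsto (tendsto_measure_setOf_lt_atBot hf hy)
      (Eventually.of_forall fun w => by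
        obtain ⟨t, ht, htw⟩ := not_bddBelow_iff.1 hbdd w
        exact ht.2.trans (monotone_measure_setOf_lt htw.le))
    rw [nonpos_iff_eq_zero.1 ha, tsub_zero]
    exact measure_mono fun x hx => hx.1

theorem measure_setOf_lt_sub_le_measure_setOf_add_lt {P : Measure X} {K : ℝ≥0∞}
    (hf : Measurable f) (hlevel : ∀ y : ℝ, Λ {x | f x = y} = 0) {y : ℝ}
    (hy : Λ {x | f x < y} ≠ ∞) (hPΛ : ∀ A : Set X, MeasurableSet A → P A ≤ K * Λ A)
    (c : ℝ≥0∞) :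
    P {x | f x < y} - K * c ≤ P {x | Λ {x' | f x' < f x} + c < Λ {x | f x < y}} := by
  set A := {x | Λ {x' | f x' < f x} + c < Λ {x | f x < y}}
  have hA : MeasurableSet A :=
    measurableSet_lt ((measurable_measure_setOf_lt.comp hf).add_const c) measurable_const
  have hS : MeasurableSet {x | f x < y} := hf measurableSet_Iio
  have hdiff : Λ ({x | f x < y} \ A) ≤ c :=
    calc Λ ({x | f x < y} \ A)
        ≤ Λ {x | f x < y ∧ Λ {x | f x < y} - c ≤ Λ {x' | f x' < f x}} :=
          measure_mono fun x hx => ⟨hx.1, tsub_le_iff_right.2 (not_lt.1 hx.2)⟩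
      _ ≤ Λ {x | f x < y} - (Λ {x | f x < y} - c) :=
          measure_setOf_lt_and_le_le_sub hf hlevel hy _
      _ ≤ c := tsub_tsub_le
  rw [tsub_le_iff_right]
  calc P {x | f x < y} = P ({x | f x < y} ∩ A) + P ({x | f x < y} \ A) :=
        (measure_inter_add_sdiff _ hA).symm
    _ ≤ P A + K * c :=
        add_le_add (measure_mono inter_subset_right)
          ((hPΛ _ (hS.diff hA)).trans (mul_le_mul_right hdiff _))

end SublevelSets

theorem lt_toReal_sub_toReal_of_add_ofReal_lt {a b : ℝ≥0∞} {t : ℝ} (hb : b ≠ ∞)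
    (ht : 0 ≤ t) (h : a + ENNReal.ofReal t < b) : t < b.toReal - a.toReal := by
  have ha : a ≠ ∞ := ne_top_of_lt (le_self_add.trans_lt h)
  have := (ENNReal.toReal_lt_toReal (by finiteness) hb).2 h
  rw [ENNReal.toReal_add ha ENNReal.ofReal_ne_top, ENNReal.toReal_ofReal ht] at this
  linarith

theorem lintegral_Ioo_ofReal_sub_mul {p u : ℝ} (hp : 0 ≤ p) (hu : 0 < u) :
    ∫⁻ t in Ioo 0 (p / u), ENNReal.ofReal (p - u * t) = ENNReal.ofReal (p ^ 2 / (2 * u)) := by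
  have hint : IntegrableOn (fun t : ℝ => p - u * t) (Ioo 0 (p / u)) :=
    (continuous_const.sub (continuous_const.mul continuous_id)).integrableOn_Icc.mono_set
      Ioo_subset_Icc_self
  have hnn : 0 ≤ᵐ[volume.restrict (Ioo 0 (p / u))] fun t => p - u * t := by
    refine (ae_restrict_iff' measurableSet_Ioo).2 (Eventually.of_forall fun t ht => ?_)
    exact sub_nonneg.2 ((lt_div_iff₀' hu).1 ht.2).le
  rw [← ofReal_integral_eq_lintegral_ofReal hint hnn, ← integral_Ioc_eq_integral_Ioo,
    ← intervalIntegral.integral_of_le (div_nonneg hp hu.le),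
    intervalIntegral.integral_sub intervalIntegrable_const
      (intervalIntegral.intervalIntegrable_id.const_mul u),
    intervalIntegral.integral_const, intervalIntegral.integral_const_mul, integral_id]
  congr 1
  rw [smul_eq_mul]
  field_simp
  ring

theorem sq_div_le_integral_of_linear_tail_bound {α : Type*} [MeasurableSpace α]
    {μ : Measure α} {D : α → ℝ} (hD : Integrable D μ) (hD0 : 0 ≤ D) {p u : ℝ}
    (hp : 0 ≤ p) (hu : 0 < u)
    (htail : ∀ t ∈ Ioo 0 (p / u), ENNReal.ofReal (p - u * t) ≤ μ {x | t < D x}) :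
    p ^ 2 / (2 * u) ≤ ∫ x, D x ∂μ := by
  have hD0' : 0 ≤ᵐ[μ] D := Eventually.of_forall hD0
  rw [← ENNReal.ofReal_le_ofReal_iff (integral_nonneg hD0),
    ofReal_integral_eq_lintegral_ofReal hD hD0',
    lintegral_eq_lintegral_meas_lt μ hD0' hD.aemeasurable, ← lintegral_Ioo_ofReal_sub_mul hp hu]
  calc ∫⁻ t in Ioo 0 (p / u), ENNReal.ofReal (p - u * t)
      ≤ ∫⁻ t in Ioo 0 (p / u), μ {x | t < D x} :=
        setLIntegral_mono
          (Antitone.measurable fun _ _ hst => measure_mono fun _ hx => hst.trans_lt hx) htail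
    _ ≤ ∫⁻ t in Ioi 0, μ {x | t < D x} := lintegral_mono_set Ioo_subset_Ioi_self

theorem plateau_free_decrease_general
    {X : Type*} [MeasurableSpace X] (Λ : Measure X)
    (P : Measure X) [IsProbabilityMeasure P]
    (f : X → ℝ) (hf : Measurable f)
    (hlevel : ∀ y : ℝ, Λ {x | f x = y} = 0)
    (hfin : ∀ x : X, Λ {x' | f x' ≤ f x} < ⊤)
    (u : ℝ) (hu : 0 < u)
    (hPu : ∀ A : Set X, MeasurableSet A → P A ≤ ENNReal.ofReal u * Λ A)
    (m : X) :
    (∀ q ∈ Icc (0 : ℝ) (P {x | f x < f m}).toReal,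
      ENNReal.ofReal q ≤
        P {x | Λ {x' | f x' < f x}
            + ENNReal.ofReal (((P {x | f x < f m}).toReal - q) / u)
            ≤ Λ {x' | f x' < f m}}) ∧
    (P {x | f x < f m}).toReal ^ 2 / (2 * u) ≤
      ∫ x, max 0 ((Λ {x' | f x' < f m}).toReal - (Λ {x' | f x' < f x}).toReal) ∂P := by
  have hm : Λ {x | f x < f m} ≠ ∞ :=
    ne_top_of_le_ne_top (hfin m).ne (measure_mono (ofPred_subset_ofPred.2 fun _ => le_of_lt))
  set p := (P {x | f x < f m}).toReal
  have hp : ENNReal.ofReal p = P {x | f x < f m} := ENNReal.ofReal_toReal (measure_ne_top P _)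
  have hdecrease (c : ℝ) (hc : 0 ≤ c) :
      ENNReal.ofReal (p - u * c) ≤
        P {x | Λ {x' | f x' < f x} + ENNReal.ofReal c < Λ {x | f x < f m}} := by
    rw [ENNReal.ofReal_sub _ (mul_nonneg hu.le hc), hp, ENNReal.ofReal_mul hu.le]
    exact measure_setOf_lt_sub_le_measure_setOf_add_lt hf hlevel hm hPu _
  refine ⟨fun q hq => ?_, ?_⟩
  · refine le_trans ?_ ((hdecrease _ (div_nonneg (sub_nonneg.2 hq.2) hu.le)).trans
      (measure_mono (ofPred_subset_ofPred.2 fun _ => le_of_lt)))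
    rw [mul_div_cancel₀ _ hu.ne', sub_sub_cancel]
  set D := fun x => max 0 ((Λ {x' | f x' < f m}).toReal - (Λ {x' | f x' < f x}).toReal)
  have hD : Integrable D P := by
    have hDmeas : Measurable D := measurable_const.max
      (measurable_const.sub (measurable_measure_setOf_lt.comp hf).ennreal_toReal)
    refine .of_bound hDmeas.aestronglyMeasurable (Λ {x' | f x' < f m}).toReal
      (Eventually.of_forall fun x => ?_)
    rw [Real.norm_of_nonneg (le_max_left _ _)]
    exact max_le ENNReal.toReal_nonneg (sub_le_self _ ENNReal.toReal_nonneg)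
  refine sq_div_le_integral_of_linear_tail_bound hD (fun _ => le_max_left _ _)
    ENNReal.toReal_nonneg hu fun t ht => (hdecrease t ht.1.le).trans ?_
  exact measure_mono fun _ hx =>
    lt_max_of_lt_right (lt_toReal_sub_toReal_of_add_ofReal_lt hm ht.1.le hx)

/-- Plateau-free decrease guarantee. If all level sets of `f` are
`Λ`-null (so `f̂^< = f̂^≤ =: f̂`) and `f̂` is everywhere finite, then for a sample
`x ∼ P` (with density bounded by `u` w.r.t. `Λ`) and `p = P(S_f^<(m))`:
for every `q ∈ [0, p]` the `q`-quantile of the `f̂`-decrease is at least `(p − q)/u`,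
and the expected decrease satisfies `∫ max{0, f̂(m) − f̂(x)} dP(x) ≥ p²/(2u)`. -/
theorem plateau_free_decrease
    {X : Type*} [MeasurableSpace X] (Λ : Measure X) [SigmaFinite Λ]
    (P : Measure X) [IsProbabilityMeasure P]
    (f : X → ℝ) (hf : Measurable f)
    (hlevel : ∀ y : ℝ, Λ {x | f x = y} = 0)
    (hfin : ∀ x : X, Λ {x' | f x' ≤ f x} < ⊤)
    (u : ℝ) (hu : 0 < u)
    (hPu : ∀ A : Set X, MeasurableSet A → P A ≤ ENNReal.ofReal u * Λ A)
    (m : X) :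
    (∀ q ∈ Icc (0 : ℝ) (P {x | f x < f m}).toReal,
      ENNReal.ofReal q ≤
        P {x | Λ {x' | f x' < f x}
            + ENNReal.ofReal (((P {x | f x < f m}).toReal - q) / u)
            ≤ Λ {x' | f x' < f m}}) ∧
    (P {x | f x < f m}).toReal ^ 2 / (2 * u) ≤
      ∫ x, max 0 ((Λ {x' | f x' < f m}).toReal - (Λ {x' | f x' < f x}).toReal) ∂P :=
  plateau_free_decrease_general Λ P f hf hlevel hfin u hu hPu m
end

section
/- Let Λ be the Lebesgue measure on ℝ^d, let C be a symmetric positive-definite d×d real matrix, m ∈ ℝ^d, and let P be the Gaussian measure on ℝ^d with density x ↦ (2π)^{-d/2} (det C)^{-1/2} exp(−½ (x−m)ᵀ C⁻¹ (x−m)) with respect to Λ. Let f : ℝ^d → ℝ be measurable with every level set Λ-null (so f̂^< = f̂^≤ =: f̂) and with f̂(m) < ∞. Set p = P({x | f(x) < f(m)}). Then for every q ∈ [0,p]: P({x | f̂(x) + (2π)^{d/2}·√(det C)·(p − q) ≤ f̂(m)}) ≥ q, and ∫ max{0, f̂(m) − f̂(x)} dP(x) ≥ (2π)^{d/2}·√(det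 C)·p²/2. -/
/-!
Write `F y = Λ {f < y}` and `S = {f < f m}`. The Gaussian density is bounded by
`c = (2π)^{-d/2} (det C)^{-1/2}`, so `P ≤ c • Λ`, and `P` is finite because `C⁻¹` dominates a
multiple of the identity.

Since the level sets of `f` are null, `F` is continuous, so `F ∘ f` is at most uniformly
distributed on `S`: the points of `S` with `F (f x) > Λ S - r` have `Λ`-measure at most `r`,
hence `P`-measure at most `c r`. This is the quantile bound.

For the mean, `Λ S - F (f x) = Λ {x' | f x ≤ f x' < f m}` for `x ∈ S`, so the expected decrease
is `(P ⊗ Λ) A` with `A = {(x, x') | f x ≤ f x' < f m}`, which is at least `c⁻¹ (P ⊗ P) A`.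
Since `A` and its mirror image cover `S × S`, `(P ⊗ P) A ≥ P(S)² / 2`.
-/

open MeasureTheory Set Matrix
open scoped ENNReal

section Sublevel

variable {X : Type*} [MeasurableSpace X] {μ : Measure X} {f : X → ℝ}

theorem le_measure_setOf_le_of_forall_lt (hf : Measurable f) {t r : ℝ} (htr : t < r)
    (hr : μ {x | f x < r} ≠ ∞) {s : ℝ≥0∞} (hs : ∀ y > t, s ≤ μ {x | f x < y}) :
    s ≤ μ {x | f x ≤ t} := by
  have hlim := tendsto_measure_biInter_gt (μ := μ) (s := fun y => {x | f x < y}) (a := t)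
    (fun _ _ => (hf measurableSet_Iio).nullMeasurableSet)
    (fun _ _ _ hij _ hx => lt_of_lt_of_le hx hij) ⟨r, htr, hr⟩
  have hinter : ⋂ y > t, {x | f x < y} = {x | f x ≤ t} := by
    ext x
    simpa using forall_gt_iff_le
  rw [hinter] at hlim
  exact ge_of_tendsto hlim (eventually_nhdsWithin_of_forall hs)

theorem eq_zero_of_forall_le_measure_setOf_lt (hf : Measurable f) {a : ℝ}
    (ha : μ {x | f x < a} ≠ ∞) {s : ℝ≥0∞} (hs : ∀ y, s ≤ μ {x | f x < y}) : s = 0 := by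
  have hlim := tendsto_measure_iInter_atBot (μ := μ) (s := fun y : ℝ => {x | f x < y})
    (fun _ => (hf measurableSet_Iio).nullMeasurableSet)
    (fun _ _ hij _ hx => lt_of_lt_of_le hx hij) ⟨a, ha⟩
  have hinter : ⋂ y : ℝ, {x | f x < y} = ∅ :=
    eq_empty_of_forall_notMem fun x hx => lt_irrefl (f x) (mem_iInter.1 hx (f x))
  rw [hinter, measure_empty] at hlim
  exact nonpos_iff_eq_zero.1 (ge_of_tendsto' hlim hs)

theorem measure_setOf_le_le_measure_setOf_lt (hlevel : ∀ y, μ {x | f x = y} = 0) (t : ℝ) :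
    μ {x | f x ≤ t} ≤ μ {x | f x < t} :=
  calc μ {x | f x ≤ t} ≤ μ ({x | f x < t} ∪ {x | f x = t}) :=
        measure_mono fun _ (hx : _ ≤ t) => hx.lt_or_eq
    _ ≤ μ {x | f x < t} + μ {x | f x = t} := measure_union_le _ _
    _ = μ {x | f x < t} := by rw [hlevel t, add_zero]

/-- With `t` the infimum of `f` over this set, the set and `{f < t}` are disjoint parts of
`{f < a}`, while `μ {f < t} ≥ μ {f < a} - r` by right-continuity of `y ↦ μ {f < y}` at `t`. -/
theorem measure_setOf_lt_and_lt_measure_add_le (hf : Measurable f)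
    (hlevel : ∀ y, μ {x | f x = y} = 0) {a : ℝ} (ha : μ {x | f x < a} ≠ ∞) (r : ℝ≥0∞) :
    μ {x | f x < a ∧ μ {x' | f x' < a} < μ {x' | f x' < f x} + r} ≤ r := by
  set V := μ {x' | f x' < a}
  set D := {x | f x < a ∧ V < μ {x' | f x' < f x} + r}
  rcases D.eq_empty_or_nonempty with hD | ⟨x₀, hx₀⟩
  · simp [hD]
  have hD_le : ∀ x ∈ D, V - r ≤ μ {x' | f x' < f x} :=
    fun x hx => tsub_le_iff_right.2 hx.2.le
  by_cases hbdd : BddBelow (f '' D)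
  · set t := sInf (f '' D)
    have ht_le : ∀ x ∈ D, t ≤ f x := fun x hx => csInf_le hbdd (mem_image_of_mem f hx)
    have hta : t < a := (ht_le x₀ hx₀).trans_lt hx₀.1
    have hVt : V - r ≤ μ {x | f x < t} := by
      refine le_trans ?_ (measure_setOf_le_le_measure_setOf_lt hlevel t)
      refine le_measure_setOf_le_of_forall_lt hf hta ha fun y hy => ?_
      obtain ⟨_, ⟨x, hx, rfl⟩, hxy⟩ :=
        exists_lt_of_csInf_lt ⟨f x₀, mem_image_of_mem f hx₀⟩ hy
      exact (hD_le x hx).trans (measure_mono fun z hz => hz.trans hxy)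
    have hsplit : μ D + μ {x | f x < t} ≤ V := by
      rw [← measure_union (μ := μ) (s₁ := D) (s₂ := {x | f x < t})
        (disjoint_left.2 fun x hx hxt => (ht_le x hx).not_gt hxt)
        (measurableSet_lt hf measurable_const)]
      exact measure_mono (union_subset (fun x hx => hx.1) fun x hx => lt_trans hx hta)
    have ht_ne_top : μ {x | f x < t} ≠ ∞ :=
      ne_top_of_le_ne_top ha (measure_mono fun x hx => lt_trans hx hta)
    calc μ D ≤ V - μ {x | f x < t} := ENNReal.le_sub_of_add_le_right ht_ne_top hsplit
      _ ≤ r := tsub_le_iff_left.2 (tsub_le_iff_right.1 hVt)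
  · have hVr : V - r = 0 := by
      refine eq_zero_of_forall_le_measure_setOf_lt hf ha fun y => ?_
      obtain ⟨_, ⟨x, hx, rfl⟩, hxy⟩ := not_bddBelow_iff.1 hbdd y
      exact (hD_le x hx).trans (measure_mono fun z hz => hz.trans hxy)
    exact (measure_mono fun x hx => hx.1).trans (tsub_eq_zero_iff_le.1 hVr)

end Sublevel

section Comparison

variable {X : Type*} [MeasurableSpace X] {μ ν : Measure X} {c : ℝ≥0∞} {f : X → ℝ}

theorem measure_setOf_lt_le_measure_add_mul (hν : ν ≤ c • μ) (hf : Measurable f)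
    (hlevel : ∀ y, μ {x | f x = y} = 0) {a : ℝ} (ha : μ {x | f x < a} ≠ ∞) (r : ℝ≥0∞) :
    ν {x | f x < a} ≤ ν {x | μ {x' | f x' < f x} + r ≤ μ {x' | f x' < a}} + c * r := by
  set E := {x | μ {x' | f x' < f x} + r ≤ μ {x' | f x' < a}}
  have hdiff : {x | f x < a} \ E =
      {x | f x < a ∧ μ {x' | f x' < a} < μ {x' | f x' < f x} + r} := by
    ext x
    simp [E, not_le]
  calc ν {x | f x < a} ≤ ν ({x | f x < a} ∩ E) + ν ({x | f x < a} \ E) :=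
        measure_le_inter_add_sdiff _ _ _
    _ ≤ ν E + c * μ ({x | f x < a} \ E) :=
        add_le_add (measure_mono inter_subset_right) (hν _)
    _ ≤ ν E + c * r := by
        rw [hdiff]
        gcongr
        exact measure_setOf_lt_and_lt_measure_add_le hf hlevel ha r

theorem measurableSet_setOf_le_and_lt (hf : Measurable f) (a : ℝ) :
    MeasurableSet {z : X × X | f z.1 ≤ f z.2 ∧ f z.2 < a} :=
  (measurableSet_le (hf.comp measurable_fst) (hf.comp measurable_snd)).inter
    (measurableSet_lt (hf.comp measurable_snd) measurable_const)

theorem measure_setOf_lt_sq_le_two_mul_prod [SFinite ν] (hf : Measurable f) (a : ℝ) :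
    ν {x | f x < a} ^ 2 ≤ 2 * ν.prod ν {z | f z.1 ≤ f z.2 ∧ f z.2 < a} := by
  set A := {z : X × X | f z.1 ≤ f z.2 ∧ f z.2 < a}
  have hswap : ν.prod ν (Prod.swap ⁻¹' A) = ν.prod ν A := by
    rw [← Measure.map_apply measurable_swap (measurableSet_setOf_le_and_lt hf a),
      Measure.prod_swap]
  have hcover : {x | f x < a} ×ˢ {x | f x < a} ⊆ A ∪ Prod.swap ⁻¹' A := by
    rintro ⟨x, y⟩ ⟨hx, hy⟩
    rcases le_total (f x) (f y) with h | h
    exacts [Or.inl ⟨h, hy⟩, Or.inr ⟨h, hx⟩]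
  calc ν {x | f x < a} ^ 2 = ν.prod ν ({x | f x < a} ×ˢ {x | f x < a}) := by
        rw [Measure.prod_prod, sq]
    _ ≤ ν.prod ν A + ν.prod ν (Prod.swap ⁻¹' A) :=
        (measure_mono hcover).trans (measure_union_le _ _)
    _ = 2 * ν.prod ν A := by rw [hswap, two_mul]

theorem measure_setOf_lt_sq_le_two_mul_lintegral [SFinite μ] [SFinite ν] (hν : ν ≤ c • μ)
    (hf : Measurable f) (a : ℝ) :
    ν {x | f x < a} ^ 2 ≤ 2 * c * ∫⁻ x, μ ({x' | f x' < a} \ {x' | f x' < f x}) ∂ν := by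
  have hsection : ∀ x, Prod.mk x ⁻¹' {z : X × X | f z.1 ≤ f z.2 ∧ f z.2 < a} =
      {x' | f x' < a} \ {x' | f x' < f x} := by
    intro x
    ext x'
    simp [and_comm]
  calc ν {x | f x < a} ^ 2 ≤ 2 * ν.prod ν {z | f z.1 ≤ f z.2 ∧ f z.2 < a} :=
        measure_setOf_lt_sq_le_two_mul_prod hf a
    _ ≤ 2 * (ν.prod (c • μ)) {z | f z.1 ≤ f z.2 ∧ f z.2 < a} := by
        gcongr
    _ = 2 * c * ∫⁻ x, μ ({x' | f x' < a} \ {x' | f x' < f x}) ∂ν := by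
        rw [Measure.prod_smul_right, Measure.smul_apply,
          Measure.prod_apply (measurableSet_setOf_le_and_lt hf a), smul_eq_mul, mul_assoc]
        simp_rw [hsection]

theorem measure_sdiff_le_ofReal_toReal_sub {s t : Set X} (ht : NullMeasurableSet t μ)
    (hs : μ s ≠ ∞) (hst : t ⊆ s ∨ s ⊆ t) :
    μ (s \ t) ≤ ENNReal.ofReal ((μ s).toReal - (μ t).toReal) := by
  rcases hst with hts | hst
  · have hdiff_ne_top : μ s - μ t ≠ ∞ := ne_top_of_le_ne_top hs tsub_le_self
    rw [measure_sdiff hts ht (ne_top_of_le_ne_top hs (measure_mono hts)),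
      ← ENNReal.toReal_sub_of_le (measure_mono hts) hs, ENNReal.ofReal_toReal hdiff_ne_top]
  · simp [sdiff_eq_empty.2 hst]

theorem measure_setOf_lt_toReal_sq_le_integral [SFinite μ] [IsFiniteMeasure ν] {c : ℝ}
    (hc : 0 ≤ c) (hν : ν ≤ ENNReal.ofReal c • μ) (hf : Measurable f) {a : ℝ}
    (ha : μ {x | f x < a} ≠ ∞) :
    (ν {x | f x < a}).toReal ^ 2 ≤
      2 * c * ∫ x, max 0 ((μ {x' | f x' < a}).toReal - (μ {x' | f x' < f x}).toReal) ∂ν := by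
  set g := fun x => max 0 ((μ {x' | f x' < a}).toReal - (μ {x' | f x' < f x}).toReal)
  have hmono : Monotone fun y => μ {x' | f x' < y} :=
    fun _ _ hy => measure_mono fun _ hx => lt_of_lt_of_le hx hy
  have hg_meas : Measurable g :=
    measurable_const.max (measurable_const.sub
      ((ENNReal.measurable_toReal.comp hmono.measurable).comp hf))
  have hg_int : Integrable g ν := by
    refine Integrable.of_bound hg_meas.aestronglyMeasurable (μ {x' | f x' < a}).toReal
      (ae_of_all _ fun x => ?_)
    rw [Real.norm_of_nonneg (le_max_left _ _)]
    exact max_le ENNReal.toReal_nonneg (sub_le_self _ ENNReal.toReal_nonneg)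
  have hg_ge : ∀ x, μ ({x' | f x' < a} \ {x' | f x' < f x}) ≤ ENNReal.ofReal (g x) := by
    intro x
    have hnested :
        {x' | f x' < f x} ⊆ {x' | f x' < a} ∨ {x' | f x' < a} ⊆ {x' | f x' < f x} :=
      (le_total (f x) a).imp (fun h _ hz => lt_of_lt_of_le hz h)
        fun h _ hz => lt_of_lt_of_le hz h
    exact (measure_sdiff_le_ofReal_toReal_sub
      (measurableSet_lt hf measurable_const).nullMeasurableSet ha hnested).trans
      (ENNReal.ofReal_le_ofReal (le_max_right _ _))
  have key : ν {x | f x < a} ^ 2 ≤ 2 * ENNReal.ofReal c * ENNReal.ofReal (∫ x, g x ∂ν) := by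
    rw [ofReal_integral_eq_lintegral_ofReal hg_int (ae_of_all _ fun _ => le_max_left _ _)]
    exact (measure_setOf_lt_sq_le_two_mul_lintegral hν hf a).trans
      (by gcongr with x; exact hg_ge x)
  rw [← ENNReal.ofReal_toReal (measure_ne_top ν _), ← ENNReal.ofReal_pow ENNReal.toReal_nonneg,
    ← ENNReal.ofReal_ofNat 2, ← ENNReal.ofReal_mul zero_le_two,
    ← ENNReal.ofReal_mul (by positivity)] at key
  have hg_nonneg : 0 ≤ ∫ x, g x ∂ν := integral_nonneg fun _ => le_max_left _ _
  exact (ENNReal.ofReal_le_ofReal_iff (by positivity)).1 key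

end Comparison

section Gaussian

variable {ι : Type*} [Fintype ι]

theorem Matrix.PosDef.exists_pos_mul_dotProduct_self_le {M : Matrix ι ι ℝ} (hM : M.PosDef) :
    ∃ ε > 0, ∀ v : ι → ℝ, ε * (v ⬝ᵥ v) ≤ v ⬝ᵥ M *ᵥ v := by
  rcases isEmpty_or_nonempty ι with hι | hι
  · exact ⟨1, one_pos, fun v => by simp [Subsingleton.elim v 0]⟩
  set Q : EuclideanSpace ℝ ι → ℝ := fun u => u.ofLp ⬝ᵥ M *ᵥ u.ofLp
  have hQ_cont : Continuous Q := by
    simp only [Q, dotProduct, mulVec]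
    fun_prop
  obtain ⟨u₀, hu₀, hmin⟩ := (isCompact_sphere (0 : EuclideanSpace ℝ ι) 1).exists_isMinOn
    (NormedSpace.sphere_nonempty.2 zero_le_one) hQ_cont.continuousOn
  have hu₀_ne : u₀ ≠ 0 := ne_zero_of_mem_unit_sphere ⟨u₀, hu₀⟩
  refine ⟨Q u₀, hM.dotProduct_mulVec_pos (by simpa using hu₀_ne), fun v => ?_⟩
  rcases eq_or_ne v 0 with rfl | hv
  · simp
  set w := WithLp.toLp 2 v
  have hw : 0 < ‖w‖ := norm_pos_iff.2 (by simpa [w] using hv)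
  have hvv : v ⬝ᵥ v = ‖w‖ ^ 2 := by
    simp only [w, EuclideanSpace.norm_eq, Real.norm_eq_abs, sq_abs, dotProduct]
    rw [Real.sq_sqrt (Finset.sum_nonneg fun i _ => sq_nonneg (v i))]
    simp only [sq]
  have hsphere : ‖w‖⁻¹ • w ∈ Metric.sphere (0 : EuclideanSpace ℝ ι) 1 := by
    simp [norm_smul, hw.ne']
  have hQ_smul : Q (‖w‖⁻¹ • w) = (‖w‖ ^ 2)⁻¹ * (v ⬝ᵥ M *ᵥ v) := by
    simp only [Q, WithLp.ofLp_smul, mulVec_smul, dotProduct_smul, smul_dotProduct, smul_eq_mul, w]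
    ring
  have hQ_ge := hmin hsphere
  rw [mem_ofPred_eq, hQ_smul, le_inv_mul_iff₀ (by positivity)] at hQ_ge
  rw [hvv]
  linarith

theorem integrable_exp_neg_mul_dotProduct_self {b : ℝ} (hb : 0 < b) :
    Integrable fun v : ι → ℝ => Real.exp (-b * (v ⬝ᵥ v)) := by
  have hprod : (fun v : ι → ℝ => Real.exp (-b * (v ⬝ᵥ v))) =
      fun v => ∏ i, Real.exp (-b * v i ^ 2) := by
    ext v
    simp only [dotProduct, Finset.mul_sum, Real.exp_sum, sq]
  rw [hprod]
  exact Integrable.fintype_prod (f := fun _ t => Real.exp (-b * t ^ 2))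
    fun _ => integrable_exp_neg_mul_sq hb

theorem isFiniteMeasure_withDensity_exp_neg_quadratic {M : Matrix ι ι ℝ} (hM : M.PosDef)
    (c : ℝ) (m : ι → ℝ) :
    IsFiniteMeasure (volume.withDensity fun x =>
      ENNReal.ofReal (c * Real.exp (-(1 / 2) * ((x - m) ⬝ᵥ M *ᵥ (x - m))))) := by
  obtain ⟨ε, hε, hM_ge⟩ := hM.exists_pos_mul_dotProduct_self_le
  have hdom :
      Integrable fun x : ι → ℝ => |c| * Real.exp (-(ε / 2) * ((x - m) ⬝ᵥ (x - m))) :=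
    ((integrable_exp_neg_mul_dotProduct_self (half_pos hε)).comp_sub_right m).const_mul _
  have hcont :
      Continuous fun x : ι → ℝ => c * Real.exp (-(1 / 2) * ((x - m) ⬝ᵥ M *ᵥ (x - m))) := by
    simp only [dotProduct, mulVec, Pi.sub_apply]
    fun_prop
  refine isFiniteMeasure_withDensity_ofReal
    (hdom.mono hcont.aestronglyMeasurable (ae_of_all _ fun x => ?_)).hasFiniteIntegral
  simp only [norm_mul, Real.norm_eq_abs, abs_abs, Real.abs_exp]
  exact mul_le_mul_of_nonneg_left (Real.exp_le_exp.2 (by linarith [hM_ge (x - m)]))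
    (abs_nonneg c)

theorem withDensity_exp_neg_quadratic_le {M : Matrix ι ι ℝ} (hM : M.PosSemidef) {c : ℝ}
    (hc : 0 ≤ c) (m : ι → ℝ) (μ : Measure (ι → ℝ)) :
    μ.withDensity (fun x =>
        ENNReal.ofReal (c * Real.exp (-(1 / 2) * ((x - m) ⬝ᵥ M *ᵥ (x - m)))))
      ≤ ENNReal.ofReal c • μ := by
  rw [← withDensity_const]
  refine withDensity_mono (ae_of_all _ fun x => ENNReal.ofReal_le_ofReal ?_)
  have hQ : 0 ≤ (x - m) ⬝ᵥ M *ᵥ (x - m) := by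
    simpa using hM.dotProduct_mulVec_nonneg (x - m)
  exact mul_le_of_le_one_right hc (Real.exp_le_one_iff.2 (by linarith))

end Gaussian

theorem gaussian_decrease_general
    (d : ℕ)
    (C : Matrix (Fin d) (Fin d) ℝ) (hC : C.PosDef)
    (m : Fin d → ℝ)
    (P : Measure (Fin d → ℝ))
    (hP : P = volume.withDensity fun x =>
      ENNReal.ofReal ((2 * Real.pi) ^ (-(d : ℝ) / 2) * (Real.sqrt C.det)⁻¹ *
        Real.exp (-(1 / 2) * ((x - m) ⬝ᵥ C⁻¹.mulVec (x - m)))))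
    (f : (Fin d → ℝ) → ℝ) (hf : Measurable f)
    (hlevel : ∀ y : ℝ, volume {x : Fin d → ℝ | f x = y} = 0)
    (hfin : volume {x : Fin d → ℝ | f x < f m} < ⊤) :
    (∀ q ∈ Icc (0 : ℝ) (P {x | f x < f m}).toReal,
      ENNReal.ofReal q ≤
        P {x | volume {x' | f x' < f x}
            + ENNReal.ofReal ((2 * Real.pi) ^ ((d : ℝ) / 2) * Real.sqrt C.det *
                ((P {x | f x < f m}).toReal - q))
            ≤ volume {x' | f x' < f m}}) ∧
    (2 * Real.pi) ^ ((d : ℝ) / 2) * Real.sqrt C.det * (P {x | f x < f m}).toReal ^ 2 / 2 ≤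
      ∫ x, max 0 ((volume {x' | f x' < f m}).toReal - (volume {x' | f x' < f x}).toReal) ∂P := by
  set K := (2 * Real.pi) ^ ((d : ℝ) / 2) * Real.sqrt C.det
  set c := (2 * Real.pi) ^ (-(d : ℝ) / 2) * (Real.sqrt C.det)⁻¹
  have hsqrt_det : 0 < Real.sqrt C.det := Real.sqrt_pos.2 hC.det_pos
  have hcK : c * K = 1 := by
    simp only [c, K]
    rw [neg_div, Real.rpow_neg (by positivity)]
    field_simp
  have hc : 0 ≤ c := by positivity
  have hPle : P ≤ ENNReal.ofReal c • volume :=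
    hP ▸ withDensity_exp_neg_quadratic_le hC.inv.posSemidef hc m _
  have : IsFiniteMeasure P := hP ▸ isFiniteMeasure_withDensity_exp_neg_quadratic hC.inv c m
  set p := (P {x | f x < f m}).toReal
  refine ⟨fun q ⟨hq, hqp⟩ => ?_, ?_⟩
  · have h := measure_setOf_lt_le_measure_add_mul hPle hf hlevel hfin.ne
      (ENNReal.ofReal (K * (p - q)))
    have hPS : P {x | f x < f m} = ENNReal.ofReal q + ENNReal.ofReal (p - q) := by
      rw [← ENNReal.ofReal_add hq (sub_nonneg.2 hqp), add_sub_cancel,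
        ENNReal.ofReal_toReal (measure_ne_top _ _)]
    rw [← ENNReal.ofReal_mul hc, ← mul_assoc, hcK, one_mul, hPS] at h
    exact (ENNReal.add_le_add_iff_right ENNReal.ofReal_ne_top).1 h
  · have h := measure_setOf_lt_toReal_sq_le_integral hc hPle hf hfin.ne
    calc K * p ^ 2 / 2 ≤ K * (2 * c * ∫ x, _ ∂P) / 2 := by gcongr
      _ = (c * K) * ∫ x, _ ∂P := by ring
      _ = _ := by rw [hcK, one_mul]

/-- Decrease guarantee for a Gaussian sample `x ∼ N(m, C)` on `ℝ^d`
(with Lebesgue reference measure): if all level sets of `f` are null and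
`f̂(m) < ∞`, then for `p = P(S_f^<(m))` and every `q ∈ [0, p]`, the `q`-quantile of
the `f̂`-decrease is at least `(2π)^{d/2}·√(det C)·(p − q)`, and the expected
decrease satisfies `∫ max{0, f̂(m) − f̂(x)} dP ≥ (2π)^{d/2}·√(det C)·p²/2`. -/
theorem gaussian_decrease
    (d : ℕ) (hd : 1 ≤ d)
    (C : Matrix (Fin d) (Fin d) ℝ) (hC : C.PosDef)
    (m : Fin d → ℝ)
    (P : Measure (Fin d → ℝ))
    (hP : P = volume.withDensity fun x =>
      ENNReal.ofReal ((2 * Real.pi) ^ (-(d : ℝ) / 2) * (Real.sqrt C.det)⁻¹ *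
        Real.exp (-(1 / 2) * ((x - m) ⬝ᵥ C⁻¹.mulVec (x - m)))))
    (f : (Fin d → ℝ) → ℝ) (hf : Measurable f)
    (hlevel : ∀ y : ℝ, volume {x : Fin d → ℝ | f x = y} = 0)
    (hfin : volume {x : Fin d → ℝ | f x < f m} < ⊤) :
    (∀ q ∈ Icc (0 : ℝ) (P {x | f x < f m}).toReal,
      ENNReal.ofReal q ≤
        P {x | volume {x' | f x' < f x}
            + ENNReal.ofReal ((2 * Real.pi) ^ ((d : ℝ) / 2) * Real.sqrt C.det *
                ((P {x | f x < f m}).toReal - q))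
            ≤ volume {x' | f x' < f m}}) ∧
    (2 * Real.pi) ^ ((d : ℝ) / 2) * Real.sqrt C.det * (P {x | f x < f m}).toReal ^ 2 / 2 ≤
      ∫ x, max 0 ((volume {x' | f x' < f m}).toReal - (volume {x' | f x' < f x}).toReal) ∂P :=
  gaussian_decrease_general d C hC m P hP f hf hlevel hfin
end

section
/- For every measurable f : ℝ^d → ℝ, every m ∈ ℝ^d, every σ > 0 and every a ≥ 1, it holds that p_f^<(m, a·σ) ≥ a^{−d}·p_f^<(m, σ) and p_f^≤(m, a·σ) ≥ a^{−d}·p_f^≤(m, σ). -/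
open MeasureTheory Set Filter

/-- Isotropic Gaussian measure `N(m, σ²I)` on `ℝ^d`, defined by its density
`x ↦ (2π)^{-d/2} σ^{-d} exp(−‖x−m‖²/(2σ²))` w.r.t. Lebesgue measure. -/
noncomputable def gaussES (d : ℕ) (m : EuclideanSpace ℝ (Fin d)) (σ : ℝ) :
    Measure (EuclideanSpace ℝ (Fin d)) :=
  volume.withDensity fun x =>
    ENNReal.ofReal ((2 * Real.pi) ^ (-(d : ℝ) / 2) * (σ ^ d)⁻¹ *
      Real.exp (-‖x - m‖ ^ 2 / (2 * σ ^ 2)))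

/-- Success probability of strict improvement: `p_f^<(m,σ)`. -/
noncomputable def pLt (d : ℕ) (f : EuclideanSpace ℝ (Fin d) → ℝ)
    (m : EuclideanSpace ℝ (Fin d)) (σ : ℝ) : ENNReal :=
  gaussES d m σ {x | f x < f m}

/-- Success probability of weak improvement: `p_f^≤(m,σ)`. -/
noncomputable def pLe (d : ℕ) (f : EuclideanSpace ℝ (Fin d) → ℝ)
    (m : EuclideanSpace ℝ (Fin d)) (σ : ℝ) : ENNReal :=
  gaussES d m σ {x | f x ≤ f m}

/-- Lower step-size threshold `ξ_p^f(m) = inf {σ > 0 | p_f^<(m,σ) ≤ p}`, with `inf ∅ = ∞`. -/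
noncomputable def xiES (d : ℕ) (f : EuclideanSpace ℝ (Fin d) → ℝ) (p : ℝ)
    (m : EuclideanSpace ℝ (Fin d)) : ENNReal :=
  sInf {s : ENNReal | ∃ σ : ℝ, 0 < σ ∧ s = ENNReal.ofReal σ ∧ pLt d f m σ ≤ ENNReal.ofReal p}

/-- Upper step-size threshold `η_p^f(m) = sup {σ > 0 | p_f^≤(m,σ) ≥ p}`, with `sup ∅ = 0`. -/
noncomputable def etaES (d : ℕ) (f : EuclideanSpace ℝ (Fin d) → ℝ) (p : ℝ)
    (m : EuclideanSpace ℝ (Fin d)) : ENNReal :=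
  sSup {s : ENNReal | ∃ σ : ℝ, 0 < σ ∧ s = ENNReal.ofReal σ ∧ ENNReal.ofReal p ≤ pLe d f m σ}


lemma gauss_scale_le (d : ℕ) (m : EuclideanSpace ℝ (Fin d)) (σ : ℝ) (hσ : 0 < σ)
    (a : ℝ) (ha : 1 ≤ a) (s : Set (EuclideanSpace ℝ (Fin d))) (hs : MeasurableSet s) :
    ENNReal.ofReal ((a ^ d)⁻¹) * gaussES d m σ s ≤ gaussES d m (a * σ) s := by
  have ha0 : 0 < a := lt_of_lt_of_le one_pos ha
  rw [gaussES, gaussES, withDensity_apply _ hs, withDensity_apply _ hs,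
    ← lintegral_const_mul' _ _ ENNReal.ofReal_ne_top]
  refine setLIntegral_mono' hs fun x _ => ?_
  rw [← ENNReal.ofReal_mul (by positivity)]
  apply ENNReal.ofReal_le_ofReal
  have h1 : (((a * σ) ^ d)⁻¹ : ℝ) = (a ^ d)⁻¹ * (σ ^ d)⁻¹ := by rw [mul_pow, mul_inv]
  rw [h1]
  have hexp : Real.exp (-‖x - m‖ ^ 2 / (2 * σ ^ 2)) ≤
      Real.exp (-‖x - m‖ ^ 2 / (2 * (a * σ) ^ 2)) := by
    apply Real.exp_le_exp.mpr
    rw [neg_div, neg_div, neg_le_neg_iff]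
    gcongr <;> nlinarith [norm_nonneg (x - m), sq_nonneg (a * σ - σ)]
  calc (a ^ d)⁻¹ * ((2 * Real.pi) ^ (-(d : ℝ) / 2) * (σ ^ d)⁻¹ *
        Real.exp (-‖x - m‖ ^ 2 / (2 * σ ^ 2)))
      = ((2 * Real.pi) ^ (-(d : ℝ) / 2) * ((a ^ d)⁻¹ * (σ ^ d)⁻¹)) *
        Real.exp (-‖x - m‖ ^ 2 / (2 * σ ^ 2)) := by ring
    _ ≤ _ := mul_le_mul_of_nonneg_left hexp (by positivity)

/-- The success probability does not drop too quickly when the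
step size is increased: `p_f^<(m, a·σ) ≥ a^{−d}·p_f^<(m, σ)` and
`p_f^≤(m, a·σ) ≥ a^{−d}·p_f^≤(m, σ)` for all `a ≥ 1`. -/
theorem success_probability_increasing_step_size
    (d : ℕ) (hd : 1 ≤ d)
    (f : EuclideanSpace ℝ (Fin d) → ℝ) (hf : Measurable f)
    (m : EuclideanSpace ℝ (Fin d)) (σ : ℝ) (hσ : 0 < σ) (a : ℝ) (ha : 1 ≤ a) :
    ENNReal.ofReal ((a ^ d)⁻¹) * pLt d f m σ ≤ pLt d f m (a * σ) ∧
    ENNReal.ofReal ((a ^ d)⁻¹) * pLe d f m σ ≤ pLe d f m (a * σ) := by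
  constructor
  · exact gauss_scale_le d m σ hσ a ha _ (measurableSet_lt hf measurable_const)
  · exact gauss_scale_le d m σ hσ a ha _ (measurableSet_le hf measurable_const)
end

section
/- Let f : ℝ^d → ℝ be measurable. For all probabilities 0 ≤ p_H ≤ p_T ≤ 1 and every x ∈ ℝ^d, it holds (in [0,∞] with the stated conventions) that p_H^{1/d}·ξ_{p_T}^f(x) ≤ p_T^{1/d}·η_{p_H}^f(x). -/
open MeasureTheory Set Filter

/-! Since `p_f^< ≤ p_f^≤`, every `σ` beyond `η_{p_H}^f(x)` has `p_f^<(x,σ) < p_H ≤ p_T`, hence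
`ξ_{p_T}^f(x) ≤ η_{p_H}^f(x)`; the factors `p^{1/d}` are monotone in `p`. -/

section StepSizeThresholds

variable {d : ℕ} {f : EuclideanSpace ℝ (Fin d) → ℝ} {m : EuclideanSpace ℝ (Fin d)}

lemma pLt_le_pLe (σ : ℝ) : pLt d f m σ ≤ pLe d f m σ :=
  measure_mono fun _ (hy : f _ < f m) => hy.le

lemma xiES_le_ofReal_of_etaES_lt {p q σ : ℝ} (hpq : p ≤ q)
    (hσ : etaES d f p m < ENNReal.ofReal σ) : xiES d f q m ≤ ENNReal.ofReal σ := by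
  have hσpos : 0 < σ := ENNReal.ofReal_pos.mp (pos_of_gt hσ)
  have hpLe : pLe d f m σ < ENNReal.ofReal p := by
    by_contra! hp
    exact hσ.not_ge (le_sSup ⟨σ, hσpos, rfl, hp⟩)
  have hpLt : pLt d f m σ ≤ ENNReal.ofReal q :=
    (pLt_le_pLe σ).trans (hpLe.le.trans (ENNReal.ofReal_le_ofReal hpq))
  exact sInf_le ⟨σ, hσpos, rfl, hpLt⟩

lemma xiES_le_etaES {p q : ℝ} (hpq : p ≤ q) : xiES d f q m ≤ etaES d f p m := by
  refine le_of_forall_gt_imp_ge_of_dense fun c hc => ?_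
  obtain ⟨σ, -, hησ, hσc⟩ := ENNReal.lt_iff_exists_real_btwn.mp hc
  exact (xiES_le_ofReal_of_etaES_lt hpq hησ).trans hσc.le

end StepSizeThresholds

theorem step_size_gap_general
    (d : ℕ)
    (f : EuclideanSpace ℝ (Fin d) → ℝ)
    (pH pT : ℝ) (h0 : 0 ≤ pH) (hHT : pH ≤ pT)
    (x : EuclideanSpace ℝ (Fin d)) :
    ENNReal.ofReal (pH ^ (1 / (d : ℝ))) * xiES d f pT x ≤
      ENNReal.ofReal (pT ^ (1 / (d : ℝ))) * etaES d f pH x :=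
  mul_le_mul' (ENNReal.ofReal_le_ofReal (Real.rpow_le_rpow h0 hHT (by positivity)))
    (xiES_le_etaES hHT)

/-- Gap between the lower and upper step-size thresholds:
for `0 ≤ p_H ≤ p_T ≤ 1` it holds `p_H^{1/d}·ξ_{p_T}^f(x) ≤ p_T^{1/d}·η_{p_H}^f(x)`
in `[0,∞]` (with `inf ∅ = ∞` and `sup ∅ = 0`). -/
theorem step_size_gap
    (d : ℕ) (hd : 1 ≤ d)
    (f : EuclideanSpace ℝ (Fin d) → ℝ) (hf : Measurable f)
    (pH pT : ℝ) (h0 : 0 ≤ pH) (hHT : pH ≤ pT) (h1 : pT ≤ 1)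
    (x : EuclideanSpace ℝ (Fin d)) :
    ENNReal.ofReal (pH ^ (1 / (d : ℝ))) * xiES d f pT x ≤
      ENNReal.ofReal (pT ^ (1 / (d : ℝ))) * etaES d f pH x :=
  step_size_gap_general d f pH pT h0 hHT x
end

section
/- Let f : ℝ^d → ℝ be continuously differentiable and let x ∈ ℝ^d be a regular point of f, i.e. ∇f(x) ≠ 0. Then lim_{σ → 0+} p_f^<(x, σ) = 1/2. Consequently, for every p < 1/2 the function f is p-improvable at x, i.e. ξ_p^f(x) > 0. -/
/-!
After rescaling, `p_f^<(x, σ)` is the standard Gaussian measure of `{u | f (x + σ u) < f x}`.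
Off the hyperplane `⟪∇f(x), u⟫ = 0`, which is Gaussian-null, membership of `u` in this set is
eventually decided by the sign of `⟪∇f(x), u⟫` as `σ → 0⁺`, so the measures converge to that of
the half-space `{⟪∇f(x), u⟫ < 0}`, which is `1/2` by the symmetry `u ↦ -u`. A limit above `p`
forces `p_f^<(x, σ) > p` for all small `σ > 0`, hence `ξ_p^f(x) > 0`.
-/

open MeasureTheory Set Filter

open scoped RealInnerProductSpace Topology

open Module in
lemma lintegral_comp_add_smul {E : Type*} [NormedAddCommGroup E] [NormedSpace ℝ E]
    [FiniteDimensional ℝ E] [MeasurableSpace E] [BorelSpace E] (μ : Measure E)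
    [μ.IsAddHaarMeasure] (F : E → ENNReal) (m : E) {σ : ℝ} (hσ : σ ≠ 0) :
    ∫⁻ u, F (m + σ • u) ∂μ = ENNReal.ofReal |(σ ^ finrank ℝ E)⁻¹| * ∫⁻ y, F y ∂μ := by
  have hmap := lintegral_map_equiv (fun v => F (m + v)) (MeasurableEquiv.smul₀ σ hσ) (μ := μ)
  rw [MeasurableEquiv.coe_smul₀, Measure.map_addHaar_smul μ hσ, lintegral_smul_measure,
    lintegral_add_left_eq_self F m] at hmap
  exact hmap.symm

section HalfSpace

variable {E : Type*} [NormedAddCommGroup E] [InnerProductSpace ℝ E] [FiniteDimensional ℝ E]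
  [MeasurableSpace E] [BorelSpace E] {μ ν : Measure E}

lemma ae_inner_ne_zero [ν.IsAddHaarMeasure] (hμν : μ ≪ ν) {g : E} (hg : g ≠ 0) :
    ∀ᵐ u ∂μ, ⟪g, u⟫ ≠ 0 := by
  have hkernel : LinearMap.ker (innerₛₗ ℝ g) ≠ ⊤ := fun h => hg <| by
    simpa using LinearMap.ext_iff.1 (LinearMap.ker_eq_top.1 h) g
  refine ae_iff.2 ?_
  simp only [not_not]
  exact hμν (Measure.addHaar_submodule ν _ hkernel)

lemma measure_inner_neg_eq_half [IsProbabilityMeasure μ] [μ.IsNegInvariant]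
    [ν.IsAddHaarMeasure] (hμν : μ ≪ ν) {g : E} (hg : g ≠ 0) : μ {u | ⟪g, u⟫ < 0} = 2⁻¹ := by
  have hinner : Continuous fun u : E => ⟪g, u⟫ := continuous_const.inner continuous_id
  have hnull : μ {u | ⟪g, u⟫ = 0} = 0 := by simpa using ae_iff.1 (ae_inner_ne_zero hμν hg)
  have hsymm : μ {u | 0 < ⟪g, u⟫} = μ {u | ⟪g, u⟫ < 0} := by
    rw [← Measure.measure_neg]
    congr 1; ext u; simp [inner_neg_right]
  have hsplit : {u | ⟪g, u⟫ < 0} ∪ {u | 0 < ⟪g, u⟫} = {u | ⟪g, u⟫ = 0}ᶜ := by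
    ext u; simp [lt_or_lt_iff_ne]
  have htotal : μ {u | ⟪g, u⟫ < 0} + μ {u | 0 < ⟪g, u⟫} = 1 := by
    rw [← measure_union _ (measurableSet_lt measurable_const hinner.measurable), hsplit,
      prob_compl_eq_one_iff (measurableSet_eq_fun hinner.measurable measurable_const)]
    · exact hnull
    · exact disjoint_left.2 fun u (h : ⟪g, u⟫ < 0) h' => lt_asymm h h'
  rw [hsymm, ← mul_two] at htotal
  exact ENNReal.eq_inv_of_mul_eq_one_left htotal

end HalfSpace

lemma eventually_lt_iff_inner_gradient_neg {E : Type*} [NormedAddCommGroup E]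
    [InnerProductSpace ℝ E] [CompleteSpace E] {f : E → ℝ} {x u : E}
    (hf : DifferentiableAt ℝ f x) (hu : ⟪gradient f x, u⟫ ≠ 0) :
    ∀ᶠ σ in 𝓝[>] (0 : ℝ), (f (x + σ • u) < f x ↔ ⟪gradient f x, u⟫ < 0) := by
  set F : ℝ → ℝ := fun σ => f (x + σ • u)
  have hline : HasDerivAt (fun σ : ℝ => x + σ • u) u 0 := by
    simpa using ((hasDerivAt_id (0 : ℝ)).smul_const u).const_add x
  have hF : HasDerivAt F ⟪gradient f x, u⟫ 0 := by
    have := hf.hasGradientAt.hasFDerivAt.comp_hasDerivAt_of_eq 0 hline (by simp)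
    rwa [InnerProductSpace.toDual_apply_apply] at this
  have hslope : Tendsto (slope F 0) (𝓝[>] 0) (𝓝 ⟪gradient f x, u⟫) :=
    hF.tendsto_slope.mono_left (nhdsWithin_mono _ fun σ hσ => ne_of_gt hσ)
  have hsign : ∀ᶠ σ in 𝓝[>] (0 : ℝ), (slope F 0 σ < 0 ↔ ⟪gradient f x, u⟫ < 0) := by
    rcases hu.lt_or_gt with hneg | hpos
    · filter_upwards [hslope.eventually_lt_const hneg] with σ hσ
      exact iff_of_true hσ hneg
    · filter_upwards [hslope.eventually_const_lt hpos] with σ hσ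
      exact iff_of_false hσ.not_gt hpos.not_gt
  filter_upwards [hsign, self_mem_nhdsWithin] with σ hσ (hσpos : 0 < σ)
  rw [← hσ, slope_def_field, sub_zero, div_neg_iff]
  simp [F, hσpos, hσpos.not_gt]

noncomputable def gaussDensity (d : ℕ) (m : EuclideanSpace ℝ (Fin d)) (σ : ℝ)
    (y : EuclideanSpace ℝ (Fin d)) : ℝ :=
  (2 * Real.pi) ^ (-(d : ℝ) / 2) * (σ ^ d)⁻¹ * Real.exp (-‖y - m‖ ^ 2 / (2 * σ ^ 2))

section Gaussian

variable {d : ℕ}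

lemma gaussES_eq_withDensity (m : EuclideanSpace ℝ (Fin d)) (σ : ℝ) :
    gaussES d m σ = volume.withDensity fun y => ENNReal.ofReal (gaussDensity d m σ y) :=
  rfl

lemma gaussDensity_add_smul (m u : EuclideanSpace ℝ (Fin d)) {σ : ℝ} (hσ : 0 < σ) :
    gaussDensity d m σ (m + σ • u) = (σ ^ d)⁻¹ * gaussDensity d 0 1 u := by
  have hscale : -‖m + σ • u - m‖ ^ 2 / (2 * σ ^ 2) = -‖u‖ ^ 2 / 2 := by
    rw [add_sub_cancel_left, norm_smul, Real.norm_of_nonneg hσ.le]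
    field_simp
  simp only [gaussDensity, hscale, sub_zero, one_pow, inv_one, mul_one]
  ring

lemma gaussDensity_neg (u : EuclideanSpace ℝ (Fin d)) :
    gaussDensity d 0 1 (-u) = gaussDensity d 0 1 u := by
  simp only [gaussDensity, sub_zero, norm_neg]

lemma integral_gaussDensity : ∫ y, gaussDensity d 0 1 y = 1 := by
  have hdens : gaussDensity d 0 1 =
      fun y => (2 * Real.pi) ^ (-(d : ℝ) / 2) * Real.exp (-(1 / 2) * ‖y‖ ^ 2) := by
    ext y
    simp only [gaussDensity, sub_zero, one_pow, inv_one, mul_one]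
    ring_nf
  rw [hdens, integral_const_mul, GaussianFourier.integral_rexp_neg_mul_sq_norm one_half_pos,
    finrank_euclideanSpace_fin, div_div_eq_mul_div, div_one, mul_comm Real.pi,
    ← Real.rpow_add (by positivity), neg_div, neg_add_cancel, Real.rpow_zero]

instance : IsProbabilityMeasure (gaussES d 0 1) := by
  have hint : Integrable (gaussDensity d 0 1) :=
    Integrable.of_integral_ne_zero (by rw [integral_gaussDensity]; exact one_ne_zero)
  constructor
  have hnonneg : 0 ≤ᵐ[volume] gaussDensity d 0 1 :=
    .of_forall fun y => by unfold gaussDensity; positivity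
  rw [gaussES_eq_withDensity, withDensity_apply _ MeasurableSet.univ, Measure.restrict_univ,
    ← ofReal_integral_eq_lintegral_ofReal hint hnonneg, integral_gaussDensity, ENNReal.ofReal_one]

instance : (gaussES d 0 1).IsNegInvariant := by
  refine ⟨Measure.ext fun s hs => ?_⟩
  rw [Measure.neg_apply, gaussES_eq_withDensity, withDensity_apply _ hs,
    withDensity_apply _ hs.neg, ← lintegral_indicator hs, ← lintegral_indicator hs.neg,
    ← lintegral_neg_eq_self]
  congr with y
  by_cases hy : y ∈ s <;> simp [hy, gaussDensity_neg]

lemma gaussES_eq_map (m : EuclideanSpace ℝ (Fin d)) {σ : ℝ} (hσ : 0 < σ) :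
    gaussES d m σ = (gaussES d 0 1).map fun u => m + σ • u := by
  ext S hS
  have hT : Measurable fun u : EuclideanSpace ℝ (Fin d) => m + σ • u := by fun_prop
  rw [Measure.map_apply hT hS, gaussES_eq_withDensity, gaussES_eq_withDensity,
    withDensity_apply _ hS, withDensity_apply _ (hS.preimage hT), ← lintegral_indicator hS,
    ← lintegral_indicator (hS.preimage hT)]
  have hpos : 0 < σ ^ d := pow_pos hσ d
  have hpullback : ∀ u, ((fun u => m + σ • u) ⁻¹' S).indicator
      (fun u => ENNReal.ofReal (gaussDensity d 0 1 u)) u =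
      ENNReal.ofReal (σ ^ d) * S.indicator (fun y => ENNReal.ofReal (gaussDensity d m σ y))
        (m + σ • u) := fun u => by
    by_cases hu : m + σ • u ∈ S
    · rw [indicator_of_mem hu, indicator_of_mem (show u ∈ (fun u => m + σ • u) ⁻¹' S from hu),
        gaussDensity_add_smul m u hσ, ← ENNReal.ofReal_mul hpos.le, mul_inv_cancel_left₀ hpos.ne']
    · rw [indicator_of_notMem hu,
        indicator_of_notMem (show u ∉ (fun u => m + σ • u) ⁻¹' S from hu), mul_zero]
  rw [lintegral_congr hpullback, lintegral_const_mul' _ _ ENNReal.ofReal_ne_top,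
    lintegral_comp_add_smul volume _ m hσ.ne', finrank_euclideanSpace_fin, ← mul_assoc,
    ← ENNReal.ofReal_mul hpos.le, abs_of_pos (inv_pos.2 hpos), mul_inv_cancel₀ hpos.ne',
    ENNReal.ofReal_one, one_mul]

end Gaussian

lemma tendsto_pLt_nhdsGT {d : ℕ} {f : EuclideanSpace ℝ (Fin d) → ℝ} (hf : Measurable f)
    {x : EuclideanSpace ℝ (Fin d)} (hfx : DifferentiableAt ℝ f x) (hx : gradient f x ≠ 0) :
    Tendsto (pLt d f x) (𝓝[>] 0) (𝓝 2⁻¹) := by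
  have hac : gaussES d 0 1 ≪ volume := withDensity_absolutelyContinuous _ _
  have hmeas : ∀ σ : ℝ, MeasurableSet {u | f (x + σ • u) < f x} := fun σ =>
    measurableSet_lt (hf.comp (by fun_prop)) measurable_const
  have hlim : ∀ᵐ u ∂gaussES d 0 1, ∀ᶠ σ in 𝓝[>] (0 : ℝ),
      (u ∈ {u | f (x + σ • u) < f x} ↔ u ∈ {u | ⟪gradient f x, u⟫ < 0}) := by
    filter_upwards [ae_inner_ne_zero hac hx] with u hu
    exact eventually_lt_iff_inner_gradient_neg hfx hu
  rw [← measure_inner_neg_eq_half hac hx]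
  have hA : MeasurableSet {u : EuclideanSpace ℝ (Fin d) | ⟪gradient f x, u⟫ < 0} :=
    measurableSet_lt (measurable_const.inner measurable_id) measurable_const
  refine (tendsto_measure_of_ae_tendsto_indicator_of_isFiniteMeasure _ hA hmeas hlim).congr' ?_
  filter_upwards [self_mem_nhdsWithin] with σ (hσ : 0 < σ)
  rw [pLt, gaussES_eq_map x hσ,
    Measure.map_apply (by fun_prop) (measurableSet_lt hf measurable_const)]
  rfl

lemma xiES_pos_of_eventually_lt {d : ℕ} {f : EuclideanSpace ℝ (Fin d) → ℝ} {p : ℝ}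
    {m : EuclideanSpace ℝ (Fin d)} (h : ∀ᶠ σ in 𝓝[>] 0, ENNReal.ofReal p < pLt d f m σ) :
    0 < xiES d f p m := by
  obtain ⟨ε, hε, hsub⟩ := mem_nhdsGT_iff_exists_Ioo_subset.1 h
  refine (ENNReal.ofReal_pos.2 hε).trans_le (le_sInf ?_)
  rintro s ⟨σ, hσ, rfl, hle⟩
  exact ENNReal.ofReal_le_ofReal (not_lt.1 fun hσε => (hsub ⟨hσ, hσε⟩).not_ge hle)

theorem regular_point_improvable_general
    (d : ℕ)
    (f : EuclideanSpace ℝ (Fin d) → ℝ) (hf : ContDiff ℝ 1 f)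
    (x : EuclideanSpace ℝ (Fin d)) (hx : gradient f x ≠ 0) :
    Tendsto (fun σ : ℝ => (pLt d f x σ).toReal) (nhdsWithin 0 (Ioi 0))
        (nhds (1 / 2)) ∧
    ∀ p : ℝ, p < 1 / 2 → 0 < xiES d f p x := by
  have hlim := tendsto_pLt_nhdsGT hf.continuous.measurable (hf.differentiable one_ne_zero x) hx
  refine ⟨?_, fun p hp => xiES_pos_of_eventually_lt (hlim.eventually (lt_mem_nhds ?_))⟩
  · have := (ENNReal.tendsto_toReal (by simp)).comp hlim
    rwa [ENNReal.toReal_inv, ENNReal.toReal_ofNat, ← one_div] at this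
  · exact ((ENNReal.ofReal_lt_ofReal_iff one_half_pos).2 hp).trans_eq
      (by norm_num [ENNReal.ofReal_div_of_pos])

/-- At a regular point `x` of a continuously differentiable `f`,
the success probability tends to `1/2` as `σ → 0⁺`; consequently `f` is
`p`-improvable at `x` (i.e. `ξ_p^f(x) > 0`) for every `p < 1/2`. -/
theorem regular_point_improvable
    (d : ℕ) (hd : 1 ≤ d)
    (f : EuclideanSpace ℝ (Fin d) → ℝ) (hf : ContDiff ℝ 1 f)
    (x : EuclideanSpace ℝ (Fin d)) (hx : gradient f x ≠ 0) :
    Tendsto (fun σ : ℝ => (pLt d f x σ).toReal) (nhdsWithin 0 (Ioi 0))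
        (nhds (1 / 2)) ∧
    ∀ p : ℝ, p < 1 / 2 → 0 < xiES d f p x :=
  regular_point_improvable_general d f hf x hx
end

section
/- Let a > 0 and let f : ℝ² → ℝ be the quadratic saddle function f(x₁, x₂) = a·x₁² − x₂². Then for every σ > 0 the success probability of an isotropic Gaussian sample centered at the saddle point 0 satisfies p_f^<(0, σ) = N(0, σ²I)({x ∈ ℝ² | a·x₁² − x₂² < 0}) = (2/π)·arctan(1/√a). In particular, the origin is p-improvable for every p < 2·arccot(√a)/π. -/
open MeasureTheory Set Filter

open Real

/-!
In polar coordinates the density of `N(0, σ²I)` on the plane factors as the Rayleigh density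
`r σ⁻² exp(-r²/(2σ²))` in the radius, which integrates to `1`, times the uniform density
`(2π)⁻¹` in the angle. Hence a cone (a set invariant under positive dilations) has Gaussian mass
equal to its opening angle divided by `2π`, whatever `σ` is. The sublevel set
`{a x₁² < x₂²}` is the double cone `|sin θ| > sin t` with `t = arctan √a`, of opening angle
`2 (π - 2t) = 4 arctan (1 / √a)`. As this mass is a positive constant, for `p` below it no
`σ > 0` has `p_f^<(0, σ) ≤ p`, so `ξ_p^f(0) = inf ∅ = ∞`.
-/

noncomputable def planarGaussianPDF (σ : ℝ) (p : ℝ × ℝ) : ℝ :=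
  (2 * π)⁻¹ * (σ ^ 2)⁻¹ * exp (-(p.1 ^ 2 + p.2 ^ 2) / (2 * σ ^ 2))

def EuclideanSpace.measurableEquivProdFinTwo : EuclideanSpace ℝ (Fin 2) ≃ᵐ ℝ × ℝ :=
  (MeasurableEquiv.toLp 2 (Fin 2 → ℝ)).symm.trans MeasurableEquiv.finTwoArrow

theorem EuclideanSpace.measurableEquivProdFinTwo_apply (x : EuclideanSpace ℝ (Fin 2)) :
    EuclideanSpace.measurableEquivProdFinTwo x = (x 0, x 1) := rfl

theorem EuclideanSpace.volume_preserving_measurableEquivProdFinTwo :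
    MeasurePreserving EuclideanSpace.measurableEquivProdFinTwo :=
  (volume_preserving_finTwoArrow ℝ).comp
    (EuclideanSpace.volume_preserving_symm_measurableEquiv_toLp (Fin 2))

theorem gaussES_two_zero_preimage (σ : ℝ) (S : Set (ℝ × ℝ)) :
    gaussES 2 0 σ (EuclideanSpace.measurableEquivProdFinTwo ⁻¹' S) =
      ∫⁻ p in S, ENNReal.ofReal (planarGaussianPDF σ p) := by
  set e := EuclideanSpace.measurableEquivProdFinTwo
  have hdensity : ∀ x : EuclideanSpace ℝ (Fin 2),
      (2 * π) ^ (-((2 : ℕ) : ℝ) / 2) * (σ ^ 2)⁻¹ * exp (-‖x - 0‖ ^ 2 / (2 * σ ^ 2)) =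
        planarGaussianPDF σ (e x) := fun x => by
    rw [sub_zero, EuclideanSpace.norm_sq_eq, Fin.sum_univ_two, planarGaussianPDF,
      show (-((2 : ℕ) : ℝ) / 2) = -1 by norm_num, rpow_neg_one]
    simp [e, EuclideanSpace.measurableEquivProdFinTwo_apply]
  rw [gaussES, withDensity_apply']
  simp_rw [hdensity]
  exact EuclideanSpace.volume_preserving_measurableEquivProdFinTwo.setLIntegral_comp_preimage_emb
    e.measurableEmbedding (fun p => ENNReal.ofReal (planarGaussianPDF σ p)) S

theorem integral_Ioi_mul_exp_neg_mul_sq {b : ℝ} (hb : 0 < b) :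
    ∫ r in Ioi (0 : ℝ), r * exp (-b * r ^ 2) = (2 * b)⁻¹ := by
  have h := integral_mul_cexp_neg_mul_sq (b := (b : ℂ)) (by simpa using hb)
  rw [← Complex.ofReal_inj]
  push_cast
  rw [← h, ← integral_complex_ofReal]
  push_cast
  rfl

theorem lintegral_Ioi_rayleigh_pdf {σ : ℝ} (hσ : 0 < σ) :
    ∫⁻ r in Ioi (0 : ℝ), ENNReal.ofReal (r * ((σ ^ 2)⁻¹ * exp (-r ^ 2 / (2 * σ ^ 2)))) = 1 := by
  have hb : 0 < (2 * σ ^ 2)⁻¹ := by positivity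
  have heq : ∀ r : ℝ, r * ((σ ^ 2)⁻¹ * exp (-r ^ 2 / (2 * σ ^ 2)))
      = (σ ^ 2)⁻¹ * (r * exp (-(2 * σ ^ 2)⁻¹ * r ^ 2)) := fun r => by ring_nf
  simp_rw [heq]
  rw [← ofReal_integral_eq_lintegral_ofReal, integral_const_mul,
    integral_Ioi_mul_exp_neg_mul_sq hb]
  · rw [show (σ ^ 2)⁻¹ * (2 * (2 * σ ^ 2)⁻¹)⁻¹ = 1 by field_simp, ENNReal.ofReal_one]
  · exact ((integrable_mul_exp_neg_mul_sq hb).const_mul _).integrableOn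
  · filter_upwards [ae_restrict_mem measurableSet_Ioi] with r (hr : 0 < r)
    positivity

theorem planarGaussianPDF_polarCoord_symm (σ : ℝ) (q : ℝ × ℝ) :
    planarGaussianPDF σ (polarCoord.symm q) =
      (2 * π)⁻¹ * ((σ ^ 2)⁻¹ * exp (-q.1 ^ 2 / (2 * σ ^ 2))) := by
  have hr : (q.1 * cos q.2) ^ 2 + (q.1 * sin q.2) ^ 2 = q.1 ^ 2 := by
    linear_combination q.1 ^ 2 * sin_sq_add_cos_sq q.2
  rw [planarGaussianPDF, polarCoord_symm_apply, hr, mul_assoc]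

theorem lintegral_planarGaussianPDF_of_smul_mem_iff {σ : ℝ} (hσ : 0 < σ) {S : Set (ℝ × ℝ)}
    (hS : MeasurableSet S) (hcone : ∀ r : ℝ, 0 < r → ∀ p : ℝ × ℝ, r • p ∈ S ↔ p ∈ S) :
    ∫⁻ p in S, ENNReal.ofReal (planarGaussianPDF σ p) =
      ENNReal.ofReal (2 * π)⁻¹ * volume (Ioo (-π) π ∩ {θ | (cos θ, sin θ) ∈ S}) := by
  set A := {θ : ℝ | (cos θ, sin θ) ∈ S}
  have hA : MeasurableSet A := hS.preimage (by fun_prop)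
  set radial := fun r : ℝ => ENNReal.ofReal (r * ((σ ^ 2)⁻¹ * exp (-r ^ 2 / (2 * σ ^ 2))))
  set angular := fun θ : ℝ => ENNReal.ofReal (2 * π)⁻¹ * A.indicator 1 θ
  have hpolar : ∀ q ∈ polarCoord.target,
      ENNReal.ofReal q.1 • S.indicator (fun p => ENNReal.ofReal (planarGaussianPDF σ p))
        (polarCoord.symm q) = radial q.1 * angular q.2 := by
    rintro ⟨r, θ⟩ ⟨hr, -⟩
    replace hr : 0 < r := hr
    have hmem : polarCoord.symm (r, θ) ∈ S ↔ θ ∈ A := by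
      have : polarCoord.symm (r, θ) = r • (cos θ, sin θ) := by simp [polarCoord_symm_apply]
      rw [this, hcone r hr]
      rfl
    by_cases hθ : θ ∈ A
    · rw [indicator_of_mem (hmem.2 hθ), planarGaussianPDF_polarCoord_symm, smul_eq_mul,
        ← ENNReal.ofReal_mul hr.le]
      simp only [radial, angular, indicator_of_mem hθ, Pi.one_apply, mul_one]
      rw [← ENNReal.ofReal_mul (by positivity)]
      congr 1
      ring
    · rw [indicator_of_notMem (mt hmem.1 hθ)]
      simp [angular, indicator_of_notMem hθ]
  rw [← lintegral_indicator hS, ← lintegral_comp_polarCoord_symm,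
    setLIntegral_congr_fun polarCoord.open_target.measurableSet hpolar, polarCoord_target,
    Measure.volume_eq_prod, ← Measure.prod_restrict,
    lintegral_prod_mul (f := radial) (g := angular) (by fun_prop) (by fun_prop),
    lintegral_Ioi_rayleigh_pdf hσ, one_mul, lintegral_const_mul _ (measurable_one.indicator hA),
    lintegral_indicator_one hA, Measure.restrict_apply hA, inter_comm]

theorem sin_lt_sin_iff_mem_Ioo {t θ : ℝ} (ht0 : 0 ≤ t) (ht : t ≤ π / 2) (hθ0 : 0 ≤ θ)
    (hθ : θ ≤ π) : sin t < sin θ ↔ θ ∈ Ioo t (π - t) := by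
  have hfold : sin θ = sin (min θ (π - θ)) := by
    rcases min_cases θ (π - θ) with ⟨h, -⟩ | ⟨h, -⟩ <;> rw [h]
    rw [sin_pi_sub]
  have := min_le_left θ (π - θ)
  have := min_le_right θ (π - θ)
  have := le_min hθ0 (sub_nonneg.2 hθ)
  rw [hfold, strictMonoOn_sin.lt_iff_lt ⟨by linarith [pi_pos], ht⟩ ⟨by linarith, by linarith⟩,
    lt_min_iff, mem_Ioo]
  constructor <;> rintro ⟨h₁, h₂⟩ <;> constructor <;> linarith

theorem Ioo_inter_setOf_sin_lt_abs_sin {t : ℝ} (ht0 : 0 ≤ t) (ht : t ≤ π / 2) :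
    Ioo (-π) π ∩ {θ | sin t < |sin θ|} = Ioo (-π + t) (-t) ∪ Ioo t (π - t) := by
  ext θ
  simp only [mem_inter_iff, mem_ofPred_eq, mem_union, mem_Ioo]
  rcases le_or_gt 0 θ with hθ | hθ
  · constructor
    · rintro ⟨⟨-, hπ⟩, hsin⟩
      rw [abs_of_nonneg (sin_nonneg_of_nonneg_of_le_pi hθ hπ.le),
        sin_lt_sin_iff_mem_Ioo ht0 ht hθ hπ.le] at hsin
      exact Or.inr hsin
    · rintro (⟨-, h⟩ | ⟨h₁, h₂⟩)
      · linarith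
      have hπ : θ < π := by linarith
      refine ⟨⟨by linarith [pi_pos], hπ⟩, ?_⟩
      rw [abs_of_nonneg (sin_nonneg_of_nonneg_of_le_pi hθ hπ.le)]
      exact (sin_lt_sin_iff_mem_Ioo ht0 ht hθ hπ.le).2 ⟨h₁, h₂⟩
  · have key : -π < θ → (sin t < |sin θ| ↔ -π + t < θ ∧ θ < -t) := fun hπ => by
      rw [abs_of_nonpos (sin_nonpos_of_nonpos_of_neg_pi_le hθ.le hπ.le), ← sin_neg,
        sin_lt_sin_iff_mem_Ioo ht0 ht (by linarith) (by linarith), mem_Ioo]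
      constructor <;> rintro ⟨h₁, h₂⟩ <;> constructor <;> linarith
    constructor
    · rintro ⟨⟨hπ, -⟩, hsin⟩
      exact Or.inl ((key hπ).1 hsin)
    · rintro (⟨h₁, h₂⟩ | ⟨h, -⟩)
      · have hπ : -π < θ := by linarith
        exact ⟨⟨hπ, by linarith [pi_pos]⟩, (key hπ).2 ⟨h₁, h₂⟩⟩
      · linarith

theorem mul_cos_sq_lt_sin_sq_iff {a : ℝ} (ha : 0 ≤ a) (θ : ℝ) :
    a * cos θ ^ 2 < sin θ ^ 2 ↔ sin (arctan √a) < |sin θ| := by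
  have hsin_sq : sin (arctan √a) ^ 2 = a / (1 + a) := by
    rw [sin_arctan, div_pow, sq_sqrt ha, sq_sqrt (by positivity)]
  have hsin_nonneg : 0 ≤ sin (arctan √a) := by
    rw [sin_arctan]
    positivity
  rw [← abs_of_nonneg hsin_nonneg, ← sq_lt_sq, hsin_sq, div_lt_iff₀ (by positivity)]
  constructor <;> intro h <;> nlinarith [sin_sq_add_cos_sq θ]

theorem volume_Ioo_inter_setOf_mul_cos_sq_lt_sin_sq {a : ℝ} (ha : 0 < a) :
    volume (Ioo (-π) π ∩ {θ | a * cos θ ^ 2 < sin θ ^ 2}) =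
      ENNReal.ofReal (4 * arctan (1 / √a)) := by
  have ht0 : 0 ≤ arctan √a := arctan_nonneg.2 (sqrt_nonneg a)
  have ht : arctan √a ≤ π / 2 := (arctan_lt_pi_div_two _).le
  have hdisj : Disjoint (Ioo (-π + arctan √a) (-arctan √a)) (Ioo (arctan √a) (π - arctan √a)) :=
    disjoint_left.2 fun θ h₁ h₂ => by linarith [h₁.2, h₂.1]
  simp_rw [mul_cos_sq_lt_sin_sq_iff ha.le]
  rw [Ioo_inter_setOf_sin_lt_abs_sin ht0 ht, measure_union hdisj measurableSet_Ioo,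
    volume_Ioo, volume_Ioo, ← ENNReal.ofReal_add (by linarith) (by linarith), one_div,
    arctan_inv_of_pos (sqrt_pos.2 ha)]
  ring_nf

theorem xiES_eq_top_of_forall_lt_pLt {d : ℕ} {f : EuclideanSpace ℝ (Fin d) → ℝ} {p : ℝ}
    {m : EuclideanSpace ℝ (Fin d)} (h : ∀ σ : ℝ, 0 < σ → ENNReal.ofReal p < pLt d f m σ) :
    xiES d f p m = ⊤ := by
  rw [xiES, sInf_eq_top]
  rintro s ⟨σ, hσ, -, hle⟩
  exact absurd hle (h σ hσ).not_ge

/-- For the quadratic saddle `f(x₁,x₂) = a·x₁² − x₂²` (`a > 0`),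
the success probability at the origin is `p_f^<(0,σ) = (2/π)·arctan(1/√a)` for every
`σ > 0`; in particular the origin is `p`-improvable for every
`p < 2·arccot(√a)/π = (2/π)·arctan(1/√a)`. -/
theorem quadratic_saddle_success
    (a : ℝ) (ha : 0 < a)
    (f : EuclideanSpace ℝ (Fin 2) → ℝ)
    (hf : ∀ x : EuclideanSpace ℝ (Fin 2), f x = a * (x 0) ^ 2 - (x 1) ^ 2) :
    (∀ σ : ℝ, 0 < σ →
      pLt 2 f 0 σ = ENNReal.ofReal (2 / Real.pi * Real.arctan (1 / Real.sqrt a))) ∧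
    ∀ p : ℝ, p < 2 * Real.arctan (1 / Real.sqrt a) / Real.pi → 0 < xiES 2 f p 0 := by
  set S : Set (ℝ × ℝ) := {q | a * q.1 ^ 2 < q.2 ^ 2}
  have hS : MeasurableSet S := measurableSet_lt (by fun_prop) (by fun_prop)
  have hcone : ∀ r : ℝ, 0 < r → ∀ q : ℝ × ℝ, r • q ∈ S ↔ q ∈ S := fun r hr q => by
    simp only [S, mem_ofPred_eq, Prod.smul_fst, Prod.smul_snd, smul_eq_mul, mul_pow,
      mul_left_comm a]
    exact mul_lt_mul_iff_right₀ (by positivity)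
  have hsublevel : {x | f x < f 0} = EuclideanSpace.measurableEquivProdFinTwo ⁻¹' S := by
    ext x
    simp [S, hf, EuclideanSpace.measurableEquivProdFinTwo_apply]
  have hpLt : ∀ σ : ℝ, 0 < σ → pLt 2 f 0 σ = ENNReal.ofReal (2 / π * arctan (1 / √a)) := by
    intro σ hσ
    rw [pLt, hsublevel, gaussES_two_zero_preimage σ S,
      lintegral_planarGaussianPDF_of_smul_mem_iff hσ hS hcone,
      show {θ | (cos θ, sin θ) ∈ S} = {θ | a * cos θ ^ 2 < sin θ ^ 2} from rfl,
      volume_Ioo_inter_setOf_mul_cos_sq_lt_sin_sq ha, ← ENNReal.ofReal_mul (by positivity)]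
    congr 1
    field_simp
    ring
  refine ⟨hpLt, fun p hp => ?_⟩
  have hmass : ENNReal.ofReal p < ENNReal.ofReal (2 / π * arctan (1 / √a)) :=
    (ENNReal.ofReal_lt_ofReal_iff (by positivity)).2 (by rwa [div_mul_eq_mul_div])
  rw [xiES_eq_top_of_forall_lt_pLt fun σ hσ => hpLt σ hσ ▸ hmass]
  exact ENNReal.zero_lt_top
end

section
/- Let a > 0 and let f : ℝ² → ℝ be the linear ridge function f(x₁, x₂) = x₁ + a·|x₂|. Then for every point m = (m₁, 0) on the ridge and every σ > 0, the success probability satisfies p_f^<(m, σ) = N(m, σ²I)({x ∈ ℝ² | x₁ + a·|x₂| < m₁}) = arctan(1/a)/π. In particular, every such point is p-improvable for every p < arccot(a)/π. -/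
open MeasureTheory Set Filter

/-!
The sublevel set `{f < f m}` is the translate by `m` of the wedge `W = {x₁ + a|x₂| < 0}`, a cone
with apex at the mean of the Gaussian. In polar coordinates around `m` the Gaussian mass of such a
cone factorises into a radial integral and the length of the arc of directions the cone contains;
after normalisation it is that length divided by `2π`. `W` contains the direction `θ` iff
`π - arctan(1/a) < |θ|`, an arc of length `2 arctan(1/a)`. As this probability does not depend on
`σ`, no `σ > 0` has success probability `≤ p` for `p < arctan(1/a)/π`, so `ξ_p = inf ∅ = ∞`.
-/

open Real

theorem mul_sin_lt_cos_iff {a s : ℝ} (ha : 0 < a) (hs0 : 0 ≤ s) (hsπ : s ≤ π) :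
    a * sin s < cos s ↔ s < arctan (1 / a) := by
  have hα : arctan (1 / a) < π / 2 := arctan_lt_pi_div_two _
  rcases lt_or_ge s (π / 2) with hs | hs
  · have hcos : 0 < cos s := cos_pos_of_mem_Ioo ⟨by linarith [pi_pos], hs⟩
    calc a * sin s < cos s ↔ tan s < 1 / a := by
          rw [tan_eq_sin_div_cos, div_lt_div_iff₀ hcos ha, one_mul, mul_comm]
      _ ↔ arctan (tan s) < arctan (1 / a) := arctan_lt_arctan_iff.symm
      _ ↔ s < arctan (1 / a) := by rw [arctan_tan (by linarith [pi_pos]) hs]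
  · have hcos : cos s ≤ 0 := cos_nonpos_of_pi_div_two_le_of_le hs (by linarith)
    have hsin : 0 ≤ sin s := sin_nonneg_of_nonneg_of_le_pi hs0 hsπ
    constructor <;> intro h <;> nlinarith

theorem cos_add_mul_abs_sin_neg_iff {a θ : ℝ} (ha : 0 < a) (hθ : |θ| ≤ π) :
    cos θ + a * |sin θ| < 0 ↔ π - arctan (1 / a) < |θ| := by
  have key := mul_sin_lt_cos_iff ha (sub_nonneg.2 hθ) (by linarith [abs_nonneg θ])
  rw [sin_pi_sub, cos_pi_sub] at key
  rw [← cos_abs, abs_sin_eq_sin_abs_of_abs_le_pi hθ]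
  constructor <;> intro h
  · linarith [key.1 (by linarith)]
  · linarith [key.2 (by linarith)]

theorem volume_Ioo_inter_pi_sub_lt_abs {α : ℝ} (hα0 : 0 ≤ α) (hαπ : α ≤ π) :
    volume (Ioo (-π) π ∩ {θ | π - α < |θ|}) = ENNReal.ofReal (2 * α) := by
  have hsplit : Ioo (-π) π ∩ {θ | π - α < |θ|} = Ioo (-π) (α - π) ∪ Ioo (π - α) π := by
    ext θ
    simp only [mem_inter_iff, mem_Ioo, mem_ofPred_eq, mem_union, lt_abs]
    constructor
    · rintro ⟨⟨h1, h2⟩, h | h⟩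
      · exact Or.inr ⟨h, h2⟩
      · exact Or.inl ⟨h1, by linarith⟩
    · rintro (⟨h1, h2⟩ | ⟨h1, h2⟩)
      · exact ⟨⟨h1, by linarith⟩, Or.inr (by linarith)⟩
      · exact ⟨⟨by linarith, h2⟩, Or.inl h1⟩
  rw [hsplit, measure_union _ measurableSet_Ioo, Real.volume_Ioo, Real.volume_Ioo,
    ← ENNReal.ofReal_add (by linarith) (by linarith)]
  · congr 1; ring
  · exact Set.disjoint_left.2 fun θ h1 h2 => by linarith [h1.2, h2.1]

theorem lintegral_Ioi_mul_exp_neg_mul_sq {b : ℝ} (hb : 0 < b) :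
    ∫⁻ r in Ioi (0 : ℝ), ENNReal.ofReal (r * exp (-b * r ^ 2)) = ENNReal.ofReal (2 * b)⁻¹ := by
  rw [← integral_Ioi_mul_exp_neg_mul_sq hb, ofReal_integral_eq_lintegral_ofReal
    (integrable_mul_exp_neg_mul_sq hb).integrableOn]
  filter_upwards [self_mem_ae_restrict measurableSet_Ioi] with r hr
  exact mul_nonneg (le_of_lt hr) (exp_pos _).le

theorem setLIntegral_exp_neg_mul_cone {b : ℝ} (hb : 0 < b) {C : Set (ℝ × ℝ)}
    (hCm : MeasurableSet C) (hC : ∀ r : ℝ, 0 < r → ∀ p : ℝ × ℝ, r • p ∈ C ↔ p ∈ C) :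
    ∫⁻ p in C, ENNReal.ofReal (exp (-b * (p.1 ^ 2 + p.2 ^ 2))) =
      ENNReal.ofReal (2 * b)⁻¹ * volume (Ioo (-π) π ∩ {θ | (cos θ, sin θ) ∈ C}) := by
  set A := {θ | (cos θ, sin θ) ∈ C}
  have hAm : MeasurableSet A := hCm.preimage (by fun_prop)
  have hpolar : ∀ q ∈ polarCoord.target,
      ENNReal.ofReal q.1 * C.indicator (fun p => ENNReal.ofReal (exp (-b * (p.1 ^ 2 + p.2 ^ 2))))
        (polarCoord.symm q) =
      ENNReal.ofReal (q.1 * exp (-b * q.1 ^ 2)) * A.indicator 1 q.2 := by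
    rintro ⟨r, θ⟩ ⟨hr, -⟩
    have hsymm : polarCoord.symm (r, θ) = r • (cos θ, sin θ) := by
      simp [polarCoord_symm_apply, Prod.smul_mk]
    have hnorm : (r * cos θ) ^ 2 + (r * sin θ) ^ 2 = r ^ 2 := by
      linear_combination r ^ 2 * sin_sq_add_cos_sq θ
    by_cases hθ : θ ∈ A
    · rw [hsymm, indicator_of_mem ((hC r hr _).2 hθ), indicator_of_mem hθ]
      simp [hnorm, ENNReal.ofReal_mul (le_of_lt hr)]
    · rw [hsymm, indicator_of_notMem (mt (hC r hr _).1 hθ), indicator_of_notMem hθ]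
      simp
  calc ∫⁻ p in C, ENNReal.ofReal (exp (-b * (p.1 ^ 2 + p.2 ^ 2)))
      = ∫⁻ q in polarCoord.target,
          ENNReal.ofReal (q.1 * exp (-b * q.1 ^ 2)) * A.indicator 1 q.2 := by
        rw [← lintegral_indicator hCm, ← lintegral_comp_polarCoord_symm]
        exact setLIntegral_congr_fun polarCoord.open_target.measurableSet hpolar
    _ = ENNReal.ofReal (2 * b)⁻¹ * volume (Ioo (-π) π ∩ A) := by
        rw [polarCoord_target, Measure.volume_eq_prod, ← Measure.prod_restrict,
          lintegral_prod_mul (f := fun r => ENNReal.ofReal (r * exp (-b * r ^ 2)))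
            (g := A.indicator 1) (by fun_prop) ((measurable_const.indicator hAm).aemeasurable),
          lintegral_Ioi_mul_exp_neg_mul_sq hb, lintegral_indicator_one hAm,
          Measure.restrict_apply hAm, inter_comm]

theorem EuclideanSpace.volume_preserving_finTwo_prod :
    MeasurePreserving (fun x : EuclideanSpace ℝ (Fin 2) => (x 0, x 1)) :=
  (volume_preserving_finTwoArrow ℝ).comp (PiLp.volume_preserving_ofLp (Fin 2))

theorem gaussES_two_preimage_cone {σ : ℝ} (hσ : 0 < σ) (m : EuclideanSpace ℝ (Fin 2))
    {C : Set (ℝ × ℝ)} (hCm : MeasurableSet C)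
    (hC : ∀ r : ℝ, 0 < r → ∀ p : ℝ × ℝ, r • p ∈ C ↔ p ∈ C) :
    gaussES 2 m σ ((fun x => (x 0 - m 0, x 1 - m 1)) ⁻¹' C) =
      ENNReal.ofReal (2 * π)⁻¹ * volume (Ioo (-π) π ∩ {θ | (cos θ, sin θ) ∈ C}) := by
  set b : ℝ := (2 * σ ^ 2)⁻¹
  have hb : 0 < b := by positivity
  have hφ : MeasurePreserving (fun x : EuclideanSpace ℝ (Fin 2) => (x 0 - m 0, x 1 - m 1)) :=
    (measurePreserving_sub_right volume (m 0, m 1)).comp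
      EuclideanSpace.volume_preserving_finTwo_prod
  have hdensity : ∀ x : EuclideanSpace ℝ (Fin 2),
      ENNReal.ofReal ((2 * π) ^ (-((2 : ℕ) : ℝ) / 2) * (σ ^ 2)⁻¹ *
        exp (-‖x - m‖ ^ 2 / (2 * σ ^ 2))) =
      ENNReal.ofReal ((2 * π)⁻¹ * (σ ^ 2)⁻¹) *
        ENNReal.ofReal (exp (-b * ((x 0 - m 0) ^ 2 + (x 1 - m 1) ^ 2))) := by
    intro x
    rw [← ENNReal.ofReal_mul (by positivity), EuclideanSpace.real_norm_sq_eq, Fin.sum_univ_two]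
    norm_num [b, rpow_neg_one]
    ring_nf
  rw [gaussES, withDensity_apply _ (hCm.preimage hφ.measurable)]
  simp_rw [hdensity]
  rw [lintegral_const_mul _ (by fun_prop), hφ.setLIntegral_comp_preimage hCm
      (f := fun p => ENNReal.ofReal (exp (-b * (p.1 ^ 2 + p.2 ^ 2)))) (by fun_prop),
    setLIntegral_exp_neg_mul_cone hb hCm hC, ← mul_assoc, ← ENNReal.ofReal_mul (by positivity)]
  congr 2
  simp only [b]
  field_simp

theorem gaussES_two_linear_ridge {a σ : ℝ} (ha : 0 < a) (hσ : 0 < σ)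
    (m : EuclideanSpace ℝ (Fin 2)) :
    gaussES 2 m σ {x | x 0 - m 0 + a * |x 1 - m 1| < 0} =
      ENNReal.ofReal (arctan (1 / a) / π) := by
  set α := arctan (1 / a)
  have hα0 : 0 < α := arctan_pos.2 (by positivity)
  have hαπ : α ≤ π := by linarith [arctan_lt_pi_div_two (1 / a), pi_pos]
  have hcone : ∀ r : ℝ, 0 < r → ∀ q : ℝ × ℝ,
      r • q ∈ {q : ℝ × ℝ | q.1 + a * |q.2| < 0} ↔ q ∈ {q : ℝ × ℝ | q.1 + a * |q.2| < 0} := by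
    intro r hr q
    simp only [mem_ofPred_eq, Prod.smul_fst, Prod.smul_snd, smul_eq_mul, abs_mul, abs_of_pos hr]
    rw [show r * q.1 + a * (r * |q.2|) = r * (q.1 + a * |q.2|) by ring]
    exact ⟨fun h => neg_of_mul_neg_right h hr.le, mul_neg_of_pos_of_neg hr⟩
  have hangles : Ioo (-π) π ∩ {θ | (cos θ, sin θ) ∈ {q : ℝ × ℝ | q.1 + a * |q.2| < 0}} =
      Ioo (-π) π ∩ {θ | π - α < |θ|} := by
    ext θ
    simp only [mem_inter_iff, mem_ofPred_eq, and_congr_right_iff]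
    exact fun hθ => cos_add_mul_abs_sin_neg_iff ha (abs_le.2 ⟨hθ.1.le, hθ.2.le⟩)
  rw [show {x : EuclideanSpace ℝ (Fin 2) | x 0 - m 0 + a * |x 1 - m 1| < 0} =
      (fun x => (x 0 - m 0, x 1 - m 1)) ⁻¹' {q : ℝ × ℝ | q.1 + a * |q.2| < 0} from rfl,
    gaussES_two_preimage_cone hσ m (measurableSet_lt (by fun_prop) measurable_const) hcone,
    hangles, volume_Ioo_inter_pi_sub_lt_abs hα0.le hαπ, ← ENNReal.ofReal_mul (by positivity)]
  congr 1
  field_simp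

/-- For the linear ridge `f(x₁,x₂) = x₁ + a·|x₂|` (`a > 0`),
at every ridge point `m = (m₁, 0)` and every `σ > 0` the success probability is
`p_f^<(m,σ) = arctan(1/a)/π`; in particular every such point is `p`-improvable for
every `p < arccot(a)/π = arctan(1/a)/π`. -/
theorem linear_ridge_success
    (a : ℝ) (ha : 0 < a)
    (f : EuclideanSpace ℝ (Fin 2) → ℝ)
    (hf : ∀ x : EuclideanSpace ℝ (Fin 2), f x = x 0 + a * |x 1|) :
    ∀ m : EuclideanSpace ℝ (Fin 2), m 1 = 0 →
      (∀ σ : ℝ, 0 < σ →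
        pLt 2 f m σ = ENNReal.ofReal (Real.arctan (1 / a) / Real.pi)) ∧
      ∀ p : ℝ, p < Real.arctan (1 / a) / Real.pi → 0 < xiES 2 f p m := by
  intro m hm
  have hsucc : ∀ σ : ℝ, 0 < σ → pLt 2 f m σ = ENNReal.ofReal (arctan (1 / a) / π) := by
    intro σ hσ
    have hsub : {x | f x < f m} = {x | x 0 - m 0 + a * |x 1 - m 1| < 0} := by
      ext x
      simp only [mem_ofPred_eq, hf, hm, abs_zero, mul_zero, add_zero, sub_zero]
      constructor <;> intro h <;> linarith
    rw [pLt, hsub, gaussES_two_linear_ridge ha hσ m]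
  refine ⟨hsucc, fun p hp => ?_⟩
  rw [xiES_eq_top_of_forall_lt_pLt fun σ hσ => ?_]
  · exact ENNReal.zero_lt_top
  · rw [hsucc σ hσ]
    exact (ENNReal.ofReal_lt_ofReal_iff (by positivity)).2 hp
end

section
/- Let f : ℝ² → ℝ be the cubic saddle function f(x₁, x₂) = x₁³ + x₂². Then the success probability at the origin decays like the square root of the step size: there exist constants C > 0 and σ₀ ∈ (0,1] such that for all σ ∈ (0, σ₀], p_f^≤(0, σ) = N(0, σ²I)({x ∈ ℝ² | x₁³ + x₂² ≤ 0}) ≤ C·√σ. Consequently, for every c_- < 0 the cumulative success probability ∑_{t=0}^∞ p_f^≤(0, e^{t·c_-}) is finite. -/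
open MeasureTheory Set Filter

/-! Under `N(0, σ²I)` the coordinates are independent `N(0, σ²)` variables `X, Y`, and
`X³ + Y² ≤ 0` forces `Y² ≤ -X³`. Bounding the density of `Y` by its maximum `(2πσ²)^{-1/2}` gives
`p ≤ (2πσ²)^{-1/2} E[2√(-X³)]`, and Young's inequality `4 √σ |x|^{3/2} ≤ 3x² + σ²` reduces this
fractional moment to the second moment `E[X²] = σ²`, whence `p ≤ √(2/π) √σ`. Summability then
follows by comparison with the geometric series `∑ e^{t c/2}`. -/

open ProbabilityTheory NNReal Real

noncomputable def euclideanTwoEquivProd : EuclideanSpace ℝ (Fin 2) ≃ᵐ ℝ × ℝ :=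
  (MeasurableEquiv.toLp 2 (Fin 2 → ℝ)).symm.trans MeasurableEquiv.finTwoArrow

lemma euclideanTwoEquivProd_apply (x : EuclideanSpace ℝ (Fin 2)) :
    euclideanTwoEquivProd x = (x 0, x 1) := rfl

lemma measurePreserving_euclideanTwoEquivProd :
    MeasurePreserving euclideanTwoEquivProd volume volume :=
  (volume_preserving_finTwoArrow ℝ).comp
    (EuclideanSpace.volume_preserving_symm_measurableEquiv_toLp (Fin 2))

lemma nnrealMk_sq_ne_zero {σ : ℝ} (hσ : σ ≠ 0) : NNReal.mk (σ ^ 2) (sq_nonneg σ) ≠ 0 :=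
  fun h => pow_ne_zero 2 hσ (congrArg NNReal.toReal h)

lemma map_gaussES_two {σ : ℝ} (hσ : σ ≠ 0) (m : EuclideanSpace ℝ (Fin 2)) :
    (gaussES 2 m σ).map euclideanTwoEquivProd =
      (gaussianReal (m 0) (.mk (σ ^ 2) (sq_nonneg σ))).prod
        (gaussianReal (m 1) (.mk (σ ^ 2) (sq_nonneg σ))) := by
  ext s hs
  rw [Measure.map_apply euclideanTwoEquivProd.measurable hs, gaussES,
    withDensity_apply _ (euclideanTwoEquivProd.measurable hs),
    gaussianReal_of_var_ne_zero _ (nnrealMk_sq_ne_zero hσ),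
    gaussianReal_of_var_ne_zero _ (nnrealMk_sq_ne_zero hσ),
    prod_withDensity (measurable_gaussianPDF _ _) (measurable_gaussianPDF _ _),
    ← Measure.volume_eq_prod, withDensity_apply _ hs,
    ← measurePreserving_euclideanTwoEquivProd.setLIntegral_comp_preimage_emb
      euclideanTwoEquivProd.measurableEmbedding]
  refine lintegral_congr fun x => ?_
  rw [euclideanTwoEquivProd_apply, gaussianPDF, gaussianPDF,
    ← ENNReal.ofReal_mul (gaussianPDFReal_nonneg _ _ _)]
  congr 1
  have hnorm : ‖x - m‖ ^ 2 = (x 0 - m 0) ^ 2 + (x 1 - m 1) ^ 2 := by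
    simp [EuclideanSpace.norm_sq_eq, Fin.sum_univ_two]
  have hsqrt : (√(2 * π * σ ^ 2))⁻¹ * (√(2 * π * σ ^ 2))⁻¹ = (2 * π)⁻¹ * (σ ^ 2)⁻¹ := by
    rw [← mul_inv, Real.mul_self_sqrt (by positivity), mul_inv]
  simp only [gaussianPDFReal, NNReal.coe_mk, hnorm]
  rw [show (-((2 : ℕ) : ℝ) / 2) = -1 by norm_num, Real.rpow_neg_one, mul_mul_mul_comm, hsqrt,
    ← Real.exp_add]
  ring_nf

lemma gaussianPDFReal_le (μ : ℝ) (v : ℝ≥0) (x : ℝ) : gaussianPDFReal μ v x ≤ (√(2 * π * v))⁻¹ :=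
  mul_le_of_le_one_right (by positivity) (Real.exp_le_one_iff.2
    (div_nonpos_of_nonpos_of_nonneg (neg_nonpos.2 (sq_nonneg _)) (by positivity)))

lemma gaussianReal_le_mul_volume (μ : ℝ) {v : ℝ≥0} (hv : v ≠ 0) (s : Set ℝ) :
    gaussianReal μ v s ≤ ENNReal.ofReal (√(2 * π * v))⁻¹ * volume s := by
  rw [gaussianReal_apply μ hv, ← setLIntegral_const]
  exact lintegral_mono fun x => ENNReal.ofReal_le_ofReal (gaussianPDFReal_le μ v x)

lemma volume_setOf_sq_le_le (t : ℝ) : volume {y : ℝ | y ^ 2 ≤ t} ≤ ENNReal.ofReal (2 * √t) := by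
  calc volume {y : ℝ | y ^ 2 ≤ t} ≤ volume (Icc (-√t) √t) :=
        measure_mono fun y hy => abs_le.1 (Real.abs_le_sqrt hy)
    _ = ENNReal.ofReal (2 * √t) := by rw [Real.volume_Icc]; ring_nf

lemma gaussianReal_setOf_sq_le_le (μ : ℝ) {v : ℝ≥0} (hv : v ≠ 0) (t : ℝ) :
    gaussianReal μ v {y | y ^ 2 ≤ t} ≤ ENNReal.ofReal ((√(2 * π * v))⁻¹ * (2 * √t)) := by
  rw [ENNReal.ofReal_mul (by positivity)]
  exact (gaussianReal_le_mul_volume μ hv _).trans (mul_le_mul_right (volume_setOf_sq_le_le t) _)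

lemma integral_sq_gaussianReal_zero (v : ℝ≥0) : ∫ x, x ^ 2 ∂gaussianReal 0 v = v := by
  rw [← variance_of_integral_eq_zero aemeasurable_id' integral_id_gaussianReal,
    variance_fun_id_gaussianReal]

lemma four_mul_sqrt_mul_sqrt_neg_cube_le {σ : ℝ} (hσ : 0 ≤ σ) (x : ℝ) :
    4 * (√σ * √(-x ^ 3)) ≤ 3 * x ^ 2 + σ ^ 2 := by
  rw [← Real.sqrt_mul hσ, ← le_div_iff₀' four_pos, Real.sqrt_le_iff]
  refine ⟨by positivity, ?_⟩
  -- `(3x² + σ²)² + 16σx³ = (x + σ)² (9x² - 2σx + σ²)`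
  nlinarith [mul_nonneg (sq_nonneg (x + σ)) (add_nonneg (sq_nonneg (3 * x - σ / 3)) (sq_nonneg σ))]

lemma gaussianReal_setOf_cube_add_sq_nonpos_le (μ : ℝ) {σ : ℝ} (hσ : 0 < σ) (x : ℝ) :
    gaussianReal μ (.mk (σ ^ 2) (sq_nonneg σ)) {y | x ^ 3 + y ^ 2 ≤ 0} ≤
      ENNReal.ofReal ((√(2 * π * σ ^ 2))⁻¹ / (2 * √σ) * (3 * x ^ 2 + σ ^ 2)) := by
  have hsub : {y | x ^ 3 + y ^ 2 ≤ 0} ⊆ {y | y ^ 2 ≤ -x ^ 3} := fun y (hy : x ^ 3 + y ^ 2 ≤ 0) => by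
    simp only [mem_ofPred_eq]; linarith
  refine (measure_mono hsub).trans
    ((gaussianReal_setOf_sq_le_le μ (nnrealMk_sq_ne_zero hσ.ne') _).trans
      (ENNReal.ofReal_le_ofReal ?_))
  have hyoung := four_mul_sqrt_mul_sqrt_neg_cube_le hσ.le x
  have hc : 0 ≤ (√(2 * π * σ ^ 2))⁻¹ := by positivity
  have hsσ : 0 < √σ := Real.sqrt_pos.2 hσ
  rw [NNReal.coe_mk, div_mul_eq_mul_div, le_div_iff₀ (by positivity)]
  nlinarith

lemma integral_mul_three_mul_sq_add_sq_gaussianReal {σ : ℝ} (hσ : 0 < σ) :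
    ∫ x, (√(2 * π * σ ^ 2))⁻¹ / (2 * √σ) * (3 * x ^ 2 + σ ^ 2)
      ∂gaussianReal 0 (.mk (σ ^ 2) (sq_nonneg σ)) = 2 / √(2 * π) * √σ := by
  have hsq : Integrable (fun x : ℝ => x ^ 2) (gaussianReal 0 (.mk (σ ^ 2) (sq_nonneg σ))) :=
    (memLp_id_gaussianReal 2).integrable_sq
  rw [integral_const_mul, integral_add (hsq.const_mul 3) (integrable_const _), integral_const_mul,
    integral_sq_gaussianReal_zero]
  have hsσ : 0 < √σ := Real.sqrt_pos.2 hσ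
  simp only [NNReal.coe_mk, integral_const, probReal_univ, smul_eq_mul, one_mul]
  rw [Real.sqrt_mul' _ (sq_nonneg σ), Real.sqrt_sq hσ.le]
  field_simp
  rw [Real.sq_sqrt hσ.le]
  ring

lemma gaussES_two_zero_setOf_cube_add_sq_nonpos_le {σ : ℝ} (hσ : 0 < σ) :
    gaussES 2 0 σ {x | x 0 ^ 3 + x 1 ^ 2 ≤ 0} ≤ ENNReal.ofReal (2 / √(2 * π) * √σ) := by
  set N := gaussianReal 0 (.mk (σ ^ 2) (sq_nonneg σ))
  set g : ℝ → ℝ := fun x => (√(2 * π * σ ^ 2))⁻¹ / (2 * √σ) * (3 * x ^ 2 + σ ^ 2)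
  set T : Set (ℝ × ℝ) := {p | p.1 ^ 3 + p.2 ^ 2 ≤ 0}
  have hT : MeasurableSet T := measurableSet_le (by fun_prop) (by fun_prop)
  have hg : Integrable g N :=
    (((memLp_id_gaussianReal 2).integrable_sq.const_mul 3).add (integrable_const _)).const_mul _
  have hmap : (gaussES 2 0 σ).map euclideanTwoEquivProd = N.prod N := by
    simpa only [WithLp.ofLp_zero, Pi.zero_apply] using map_gaussES_two hσ.ne' 0
  calc gaussES 2 0 σ {x | x 0 ^ 3 + x 1 ^ 2 ≤ 0} = N.prod N T := by
        rw [← hmap, Measure.map_apply euclideanTwoEquivProd.measurable hT]; rfl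
    _ = ∫⁻ x, N (Prod.mk x ⁻¹' T) ∂N := Measure.prod_apply hT
    _ ≤ ∫⁻ x, ENNReal.ofReal (g x) ∂N :=
        lintegral_mono fun x => gaussianReal_setOf_cube_add_sq_nonpos_le 0 hσ x
    _ = ENNReal.ofReal (∫ x, g x ∂N) :=
        (ofReal_integral_eq_lintegral_ofReal hg (ae_of_all _ fun x => by positivity)).symm
    _ = ENNReal.ofReal (2 / √(2 * π) * √σ) := by
        rw [integral_mul_three_mul_sq_add_sq_gaussianReal hσ]

lemma summable_comp_exp_mul_of_norm_le_mul_sqrt {E : Type*} [NormedAddCommGroup E]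
    [CompleteSpace E] {g : ℝ → E} {C c : ℝ} (hg : ∀ σ, 0 < σ → ‖g σ‖ ≤ C * √σ) (hc : c < 0) :
    Summable fun t : ℕ => g (exp (t * c)) := by
  have hr : exp (c / 2) < 1 := exp_lt_one_iff.2 (by linarith)
  refine ((summable_geometric_of_lt_one (exp_pos _).le hr).mul_left C).of_norm_bounded fun t => ?_
  calc ‖g (exp (t * c))‖ ≤ C * √(exp (t * c)) := hg _ (exp_pos _)
    _ = C * exp (c / 2) ^ t := by rw [← exp_half, ← exp_nat_mul]; ring_nf

/-- For the cubic saddle `f(x₁,x₂) = x₁³ + x₂²`, the success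
probability at the origin decays like `√σ`: there are `C > 0` and `σ₀ ∈ (0,1]` with
`p_f^≤(0,σ) ≤ C·√σ` for all `σ ∈ (0,σ₀]`. Consequently, for every `c_- < 0` the
cumulative success probability `∑_{t} p_f^≤(0, e^{t·c_-})` is finite. -/
theorem cubic_saddle_premature
    (f : EuclideanSpace ℝ (Fin 2) → ℝ)
    (hf : ∀ x : EuclideanSpace ℝ (Fin 2), f x = (x 0) ^ 3 + (x 1) ^ 2) :
    (∃ C : ℝ, 0 < C ∧ ∃ σ₀ : ℝ, 0 < σ₀ ∧ σ₀ ≤ 1 ∧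
      ∀ σ : ℝ, 0 < σ → σ ≤ σ₀ → (pLe 2 f 0 σ).toReal ≤ C * Real.sqrt σ) ∧
    ∀ cm : ℝ, cm < 0 → Summable (fun t : ℕ => (pLe 2 f 0 (Real.exp (t * cm))).toReal) := by
  have hbound (σ : ℝ) (hσ : 0 < σ) : (pLe 2 f 0 σ).toReal ≤ 2 / √(2 * π) * √σ := by
    have hset : {x | f x ≤ f 0} = {x : EuclideanSpace ℝ (Fin 2) | x 0 ^ 3 + x 1 ^ 2 ≤ 0} := by
      ext x; simp only [mem_ofPred_eq, hf]; norm_num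
    rw [pLe, hset]
    exact ENNReal.toReal_le_of_le_ofReal (by positivity)
      (gaussES_two_zero_setOf_cube_add_sq_nonpos_le hσ)
  refine ⟨⟨_, by positivity, 1, one_pos, le_rfl, fun σ hσ _ => hbound σ hσ⟩, fun cm hcm => ?_⟩
  exact summable_comp_exp_mul_of_norm_le_mul_sqrt (g := fun σ => (pLe 2 f 0 σ).toReal)
    (fun σ hσ => (Real.norm_of_nonneg ENNReal.toReal_nonneg).trans_le (hbound σ hσ)) hcm
end
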